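/- arXiv:1709.04027 — 4 statements merged into one kernel-verified Lean document; each statement's English description precedes it below -/
import Mathlib

section
/- For every Δ ≥ 2 there exists a simple graph G with maximum degree Δ, a subgraph H of G with maximum degree Δ, and a proper edge-precolouring of H using colours from {1,...,Δ}, such that for any t < Δ - 1 the precolouring cannot be extended to a proper (Δ+t)-edge-colouring of G. (Concretely: take a star K_{1,Δ} with one edge precoloured Δ, and attach to each leaf Δ-1 pendant edges precoloured 1,2,...,Δ-1.) -/
open SimpleGraph

/-- The degree of a vertex: the number of neighbours. -/
noncomputable def edeg {V : Type} (G : SimpleGraph V) (v : V) : ℕ :=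
  (G.neighborSet v).ncard

/-- Two edges (as unordered pairs) are adjacent if they are distinct and share a vertex. -/
def EdgeAdj {V : Type} (e f : Sym2 V) : Prop := e ≠ f ∧ ∃ v, v ∈ e ∧ v ∈ f

/-- A proper edge colouring of `G` in which every edge receives a colour from its list. -/
def IsListEdgeColoring {V : Type} (G : SimpleGraph V) (L : Sym2 V → Finset ℕ)
    (C : Sym2 V → ℕ) : Prop :=
  (∀ e ∈ G.edgeSet, C e ∈ L e) ∧
  ∀ e ∈ G.edgeSet, ∀ f ∈ G.edgeSet, EdgeAdj e f → C e ≠ C f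

/-- The precolouring `C₀` of the subgraph `H` extends to a proper `L`-edge-colouring of `G`. -/
def ExtendsTo {V : Type} (G H : SimpleGraph V) (L : Sym2 V → Finset ℕ)
    (C₀ : Sym2 V → ℕ) : Prop :=
  ∃ C, IsListEdgeColoring G L C ∧ ∀ e ∈ H.edgeSet, C e = C₀ e

namespace Ctex

variable (m : ℕ)

abbrev V (m : ℕ) : Type := Option (Fin (m+2) × Option (Fin (m+1)))

def ctr : V m := none
def lf (i : Fin (m+2)) : V m := some (i, none)
def pd (i : Fin (m+2)) (j : Fin (m+1)) : V m := some (i, some j)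

def rG : V m → V m → Prop := fun u v =>
  (u = ctr m ∧ ∃ i, v = lf m i) ∨ (∃ i j, u = lf m i ∧ v = pd m i j)

def GG : SimpleGraph (V m) := SimpleGraph.fromRel (rG m)

def rH : V m → V m → Prop := fun u v =>
  (u = ctr m ∧ v = lf m (Fin.last (m+1))) ∨ (∃ i j, u = lf m i ∧ v = pd m i j)

def HH : SimpleGraph (V m) := SimpleGraph.fromRel (rH m)

def g : V m → V m → ℕ
  | none, some (_, none) => m + 2
  | some (i, none), some (i', some j) => if i = i' then j.val + 1 else 0
  | _, _ => 0

def C0 : Sym2 (V m) → ℕ :=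
  Sym2.lift ⟨fun u v => g m u v + g m v u, fun u v => by ring⟩

-- basic vertex facts
lemma ctr_ne_lf (i : Fin (m+2)) : ctr m ≠ lf m i := by simp [ctr, lf]
lemma ctr_ne_pd (i : Fin (m+2)) (j) : ctr m ≠ pd m i j := by simp [ctr, pd]
lemma lf_ne_pd (i i' : Fin (m+2)) (j) : lf m i ≠ pd m i' j := by simp [lf, pd]
lemma lf_inj : Function.Injective (lf m) := by
  intro a b h; simpa [lf] using h

-- colour values
lemma C0_star (i : Fin (m+2)) : C0 m s(ctr m, lf m i) = m + 2 := rfl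
lemma C0_pd (i : Fin (m+2)) (j : Fin (m+1)) :
    C0 m s(lf m i, pd m i j) = j.val + 1 := by
  show g m (lf m i) (pd m i j) + g m (pd m i j) (lf m i) = j.val + 1
  simp [g, lf, pd]

-- edge membership
lemma memG_star (i : Fin (m+2)) : s(ctr m, lf m i) ∈ (GG m).edgeSet := by
  rw [SimpleGraph.mem_edgeSet]
  exact ⟨ctr_ne_lf m i, Or.inl (Or.inl ⟨rfl, i, rfl⟩)⟩

lemma memG_pd (i : Fin (m+2)) (j : Fin (m+1)) :
    s(lf m i, pd m i j) ∈ (GG m).edgeSet := by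
  rw [SimpleGraph.mem_edgeSet]
  exact ⟨lf_ne_pd m i i j, Or.inl (Or.inr ⟨i, j, rfl, rfl⟩)⟩

lemma memH_star : s(ctr m, lf m (Fin.last (m+1))) ∈ (HH m).edgeSet := by
  rw [SimpleGraph.mem_edgeSet]
  exact ⟨ctr_ne_lf m _, Or.inl (Or.inl ⟨rfl, rfl⟩)⟩

lemma memH_pd (i : Fin (m+2)) (j : Fin (m+1)) :
    s(lf m i, pd m i j) ∈ (HH m).edgeSet := by
  rw [SimpleGraph.mem_edgeSet]
  exact ⟨lf_ne_pd m i i j, Or.inl (Or.inr ⟨i, j, rfl, rfl⟩)⟩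

-- edge shapes
lemma H_edge_form (e : Sym2 (V m)) (he : e ∈ (HH m).edgeSet) :
    e = s(ctr m, lf m (Fin.last (m+1))) ∨ ∃ i j, e = s(lf m i, pd m i j) := by
  induction e with
  | _ u v =>
    rw [SimpleGraph.mem_edgeSet] at he
    obtain ⟨hne, h | h⟩ := he
    · rcases h with ⟨rfl, rfl⟩ | ⟨i, j, rfl, rfl⟩
      · exact Or.inl rfl
      · exact Or.inr ⟨i, j, rfl⟩
    · rcases h with ⟨rfl, rfl⟩ | ⟨i, j, rfl, rfl⟩
      · exact Or.inl (Sym2.eq_swap)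
      · exact Or.inr ⟨i, j, Sym2.eq_swap⟩

lemma G_edge_form (e : Sym2 (V m)) (he : e ∈ (GG m).edgeSet) :
    (∃ i, e = s(ctr m, lf m i)) ∨ ∃ i j, e = s(lf m i, pd m i j) := by
  induction e with
  | _ u v =>
    rw [SimpleGraph.mem_edgeSet] at he
    obtain ⟨hne, h | h⟩ := he
    · rcases h with ⟨rfl, i, rfl⟩ | ⟨i, j, rfl, rfl⟩
      · exact Or.inl ⟨i, rfl⟩
      · exact Or.inr ⟨i, j, rfl⟩
    · rcases h with ⟨rfl, i, rfl⟩ | ⟨i, j, rfl, rfl⟩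
      · exact Or.inl ⟨i, Sym2.eq_swap⟩
      · exact Or.inr ⟨i, j, Sym2.eq_swap⟩


-- neighbor set of centre in G
lemma nbhdG_ctr : (GG m).neighborSet (ctr m) = Set.range (lf m) := by
  ext v
  simp only [SimpleGraph.mem_neighborSet, Set.mem_range]
  constructor
  · rintro ⟨hne, h | h⟩
    · rcases h with ⟨-, i, rfl⟩ | ⟨i, j, h, -⟩
      · exact ⟨i, rfl⟩
      · exact absurd h (by simp [ctr, lf])
    · rcases h with ⟨-, i, h⟩ | ⟨i, j, -, h⟩
      · exact absurd h (by simp [ctr, lf])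
      · exact absurd h (by simp [ctr, pd])
  · rintro ⟨i, rfl⟩
    exact ⟨by simp [ctr, lf], Or.inl (Or.inl ⟨rfl, i, rfl⟩)⟩

def lfN (i : Fin (m+2)) : Option (Fin (m+1)) → V m
  | none => ctr m
  | some j => pd m i j

lemma lfN_inj (i : Fin (m+2)) : Function.Injective (lfN m i) := by
  rintro (_|a) (_|b) h <;> simp [lfN, ctr, pd] at h <;> simp [h]

lemma nbhdG_lf (i : Fin (m+2)) : (GG m).neighborSet (lf m i) = Set.range (lfN m i) := by
  ext v
  simp only [SimpleGraph.mem_neighborSet, Set.mem_range]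
  constructor
  · rintro ⟨hne, h | h⟩
    · rcases h with ⟨h, -⟩ | ⟨i', j, h, rfl⟩
      · exact absurd h (by simp [ctr, lf])
      · have : i' = i := by simpa [lf] using h.symm
        exact ⟨some j, by simp [lfN, this]⟩
    · rcases h with ⟨rfl, -⟩ | ⟨i', j, -, h⟩
      · exact ⟨none, rfl⟩
      · exact absurd h (by simp [lf, pd])
  · rintro ⟨(_|j), rfl⟩
    · exact ⟨by simp [ctr, lf, lfN], Or.inr (Or.inl ⟨rfl, i, rfl⟩)⟩
    · exact ⟨by simp [lf, pd, lfN], Or.inl (Or.inr ⟨i, j, rfl, rfl⟩)⟩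

lemma nbhdG_pd (i : Fin (m+2)) (j : Fin (m+1)) :
    (GG m).neighborSet (pd m i j) = {lf m i} := by
  ext v
  simp only [SimpleGraph.mem_neighborSet, Set.mem_singleton_iff]
  constructor
  · rintro ⟨hne, h | h⟩
    · rcases h with ⟨h, -⟩ | ⟨i', j', h, -⟩
      · exact absurd h (by simp [ctr, pd])
      · exact absurd h (by simp [lf, pd])
    · rcases h with ⟨rfl, i', h⟩ | ⟨i', j', rfl, h⟩
      · exact absurd h (by simp [ctr, lf, pd])
      · obtain ⟨rfl, rfl⟩ : i = i' ∧ j = j' := by simpa [pd] using h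
        rfl
  · rintro rfl
    exact ⟨by simp [lf, pd], Or.inr (Or.inr ⟨i, j, rfl, rfl⟩)⟩

lemma edeg_G_ctr : edeg (GG m) (ctr m) = m + 2 := by
  rw [edeg, nbhdG_ctr]
  have : Function.Injective (lf m) := by intro a b h; simpa [lf] using h
  rw [← Nat.card_coe_set_eq, Nat.card_range_of_injective this, Nat.card_eq_fintype_card,
    Fintype.card_fin]

lemma edeg_G_lf (i : Fin (m+2)) : edeg (GG m) (lf m i) = m + 2 := by
  rw [edeg, nbhdG_lf, ← Nat.card_coe_set_eq, Nat.card_range_of_injective (lfN_inj m i)]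
  simp [Nat.card_eq_fintype_card]

lemma edeg_G_le (v : V m) : edeg (GG m) v ≤ m + 2 := by
  obtain (_ | ⟨i, (_ | j)⟩) := v
  · exact le_of_eq (edeg_G_ctr m)
  · exact le_of_eq (edeg_G_lf m i)
  · show edeg (GG m) (pd m i j) ≤ m + 2
    rw [edeg, nbhdG_pd m i j]
    simp

-- H : neighbor set of lf last
lemma nbhdH_lf_last :
    (HH m).neighborSet (lf m (Fin.last (m+1))) = Set.range (lfN m (Fin.last (m+1))) := by
  ext v
  simp only [SimpleGraph.mem_neighborSet, Set.mem_range]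
  constructor
  · rintro ⟨hne, h | h⟩
    · rcases h with ⟨h, -⟩ | ⟨i', j, h, rfl⟩
      · exact absurd h (by simp [ctr, lf])
      · have : i' = Fin.last (m+1) := by simpa [lf] using h.symm
        exact ⟨some j, by simp [lfN, this]⟩
    · rcases h with ⟨rfl, -⟩ | ⟨i', j, -, h⟩
      · exact ⟨none, rfl⟩
      · exact absurd h (by simp [lf, pd])
  · rintro ⟨(_|j), rfl⟩
    · exact ⟨by simp [ctr, lf, lfN], Or.inr (Or.inl ⟨rfl, rfl⟩)⟩
    · exact ⟨by simp [lf, pd, lfN], Or.inl (Or.inr ⟨_, j, rfl, rfl⟩)⟩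

lemma edeg_H_lf_last : edeg (HH m) (lf m (Fin.last (m+1))) = m + 2 := by
  rw [edeg, nbhdH_lf_last, ← Nat.card_coe_set_eq,
    Nat.card_range_of_injective (lfN_inj m _)]
  simp [Nat.card_eq_fintype_card]

lemma H_le_G : HH m ≤ GG m := by
  intro u v h
  obtain ⟨hne, h | h⟩ := h
  · exact ⟨hne, Or.inl (h.imp (fun ⟨h1, h2⟩ => ⟨h1, _, h2⟩) id)⟩
  · exact ⟨hne, Or.inr (h.imp (fun ⟨h1, h2⟩ => ⟨h1, _, h2⟩) id)⟩

lemma edeg_H_le (v : V m) : edeg (HH m) v ≤ m + 2 := by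
  refine le_trans ?_ (edeg_G_le m v)
  exact Set.ncard_le_ncard (fun w hw => H_le_G m hw) (Set.toFinite _)


lemma star_ne_star {i i' : Fin (m+2)} (h : i ≠ i') :
    s(ctr m, lf m i) ≠ s(ctr m, lf m i') := by
  intro hEq
  rw [Sym2.eq_iff] at hEq
  rcases hEq with ⟨-, h2⟩ | ⟨h1, -⟩
  · exact h (by simpa [lf] using h2)
  · simp [ctr, lf] at h1

lemma star_ne_pd (i i' i'' : Fin (m+2)) (j : Fin (m+1)) :
    s(ctr m, lf m i) ≠ s(lf m i', pd m i'' j) := by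
  intro hEq
  rw [Sym2.eq_iff] at hEq
  rcases hEq with ⟨h1, -⟩ | ⟨h1, -⟩ <;> simp [ctr, lf, pd] at h1

lemma mem_left {a b : V m} : a ∈ s(a, b) := Sym2.mem_mk_left a b
lemma mem_right {a b : V m} : b ∈ s(a, b) := Sym2.mem_mk_right a b

lemma C0_mem (e : Sym2 (V m)) (he : e ∈ (HH m).edgeSet) :
    C0 m e ∈ Finset.Icc 1 (m+2) := by
  rcases H_edge_form m e he with rfl | ⟨i, j, rfl⟩
  · rw [C0_star]; simp
  · rw [C0_pd]; have := j.isLt; simp only [Finset.mem_Icc]; omega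

lemma C0_proper : ∀ e ∈ (HH m).edgeSet, ∀ f ∈ (HH m).edgeSet,
    EdgeAdj e f → C0 m e ≠ C0 m f := by
  intro e he f hf ⟨hef, v, hve, hvf⟩
  rcases H_edge_form m e he with rfl | ⟨i, j, rfl⟩ <;>
    rcases H_edge_form m f hf with rfl | ⟨i', j', rfl⟩
  · exact absurd rfl hef
  · rw [C0_star, C0_pd]; have := j'.isLt; omega
  · rw [C0_star, C0_pd]; have := j.isLt; omega
  · -- two pendant edges
    rw [C0_pd, C0_pd]
    rw [Sym2.mem_iff] at hve hvf
    have hii' : i = i' := by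
      rcases hve with rfl | rfl <;> rcases hvf with h | h
      · simpa [lf] using h
      · exact absurd h (by simp [lf, pd])
      · exact absurd h (by simp [lf, pd])
      · exact (by simpa [pd] using h : i = i' ∧ j = j').1
    subst hii'
    have hjj' : j ≠ j' := by
      rintro rfl; exact hef rfl
    simpa using fun h => hjj' (Fin.val_injective h)

lemma no_ext (t : ℕ) (ht : t < m + 1) (C : Sym2 (V m) → ℕ)
    (h1 : ∀ e ∈ (GG m).edgeSet, C e ∈ Finset.Icc 1 (m+2+t))
    (h2 : ∀ e ∈ (GG m).edgeSet, ∀ f ∈ (GG m).edgeSet, EdgeAdj e f → C e ≠ C f)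
    (h3 : ∀ e ∈ (HH m).edgeSet, C e = C0 m e) : False := by
  have hlastC : C s(ctr m, lf m (Fin.last (m+1))) = m + 2 := by
    rw [h3 _ (memH_star m)]; exact C0_star m _
  have hpdC : ∀ i k, C s(lf m i, pd m i k) = k.val + 1 := fun i k => by
    rw [h3 _ (memH_pd m i k)]; exact C0_pd m i k
  have hFmem : ∀ i : Fin (m+1),
      C s(ctr m, lf m i.castSucc) ∈ Finset.Icc (m+3) (m+2+t) := by
    intro i
    have hIcc := h1 _ (memG_star m i.castSucc)
    rw [Finset.mem_Icc] at hIcc ⊢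
    have hne_last : C s(ctr m, lf m i.castSucc) ≠ m + 2 := by
      have hcl : i.castSucc ≠ Fin.last (m+1) := Fin.ne_of_lt (Fin.castSucc_lt_last i)
      have := h2 _ (memG_star m i.castSucc) _ (memG_star m (Fin.last (m+1)))
        ⟨star_ne_star m hcl, ctr m, mem_left m, mem_left m⟩
      rwa [hlastC] at this
    have hne_k : ∀ k : Fin (m+1), C s(ctr m, lf m i.castSucc) ≠ k.val + 1 := by
      intro k
      have := h2 _ (memG_star m i.castSucc) _ (memG_pd m i.castSucc k)
        ⟨star_ne_pd m _ _ _ _, lf m i.castSucc, mem_right m, mem_left m⟩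
      rwa [hpdC] at this
    rcases lt_or_ge (C s(ctr m, lf m i.castSucc)) (m+3) with h | h
    · exfalso
      have hle : C s(ctr m, lf m i.castSucc) ≤ m + 1 := by omega
      have h1' : 1 ≤ C s(ctr m, lf m i.castSucc) := hIcc.1
      exact hne_k ⟨C s(ctr m, lf m i.castSucc) - 1, by omega⟩ (by
        show C s(ctr m, lf m i.castSucc) = C s(ctr m, lf m i.castSucc) - 1 + 1
        omega)
    · exact ⟨h, hIcc.2⟩
  have hinj : ∀ i i' : Fin (m+1), i ≠ i' →
      C s(ctr m, lf m i.castSucc) ≠ C s(ctr m, lf m i'.castSucc) := by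
    intro i i' h
    exact h2 _ (memG_star m i.castSucc) _ (memG_star m i'.castSucc)
      ⟨star_ne_star m (fun hc => h (Fin.castSucc_injective _ hc)), ctr m, mem_left m, mem_left m⟩
  have hcard := Finset.card_le_card_of_injOn (s := Finset.univ) (t := Finset.Icc (m+3) (m+2+t))
    (fun i : Fin (m+1) => C s(ctr m, lf m i.castSucc)) (fun i _ => hFmem i)
    (fun i _ i' _ hEq => by by_contra hne; exact hinj i i' hne hEq)
  rw [Finset.card_univ, Fintype.card_fin, Nat.card_Icc] at hcard
  omega

end Ctex

/-- for every Δ ≥ 2 there is a graph G of maximum degree Δ with a precoloured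
subgraph H of maximum degree Δ, coloured with colours from {1,…,Δ}, such that for every
t < Δ - 1 the precolouring does not extend to a proper (Δ+t)-edge-colouring of G. -/
theorem statement1 (Δ : ℕ) (hΔ : 2 ≤ Δ) :
    ∃ (V : Type) (_ : Fintype V) (G H : SimpleGraph V) (C₀ : Sym2 V → ℕ),
      H ≤ G ∧
      (∀ v, edeg G v ≤ Δ) ∧ (∃ v, edeg G v = Δ) ∧
      (∀ v, edeg H v ≤ Δ) ∧ (∃ v, edeg H v = Δ) ∧
      (∀ e ∈ H.edgeSet, C₀ e ∈ Finset.Icc 1 Δ) ∧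
      (∀ e ∈ H.edgeSet, ∀ f ∈ H.edgeSet, EdgeAdj e f → C₀ e ≠ C₀ f) ∧
      ∀ t : ℕ, t < Δ - 1 →
        ¬ ∃ C : Sym2 V → ℕ,
            (∀ e ∈ G.edgeSet, C e ∈ Finset.Icc 1 (Δ + t)) ∧
            (∀ e ∈ G.edgeSet, ∀ f ∈ G.edgeSet, EdgeAdj e f → C e ≠ C f) ∧
            (∀ e ∈ H.edgeSet, C e = C₀ e) := by
  obtain ⟨m, rfl⟩ : ∃ m, Δ = m + 2 := ⟨Δ - 2, by omega⟩
  refine ⟨Ctex.V m, inferInstance, Ctex.GG m, Ctex.HH m, Ctex.C0 m,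
    Ctex.H_le_G m, Ctex.edeg_G_le m, ⟨Ctex.ctr m, Ctex.edeg_G_ctr m⟩,
    Ctex.edeg_H_le m, ⟨Ctex.lf m (Fin.last (m+1)), Ctex.edeg_H_lf_last m⟩,
    Ctex.C0_mem m, Ctex.C0_proper m, ?_⟩
  intro t ht
  rintro ⟨C, h1, h2, h3⟩
  have ht' : t < m + 1 := by omega
  exact Ctex.no_ext m t ht' C (by simpa [Nat.add_assoc] using h1) h2 h3
end

section
/- For all integers Δ > d ≥ 1 there exists a simple graph G with maximum degree Δ and a subgraph H of maximum degree d with a proper edge-precolouring of H using colours 1,...,d, such that for any t < d the precolouring cannot be extended to a proper (Δ+t)-edge-colouring of G. (Concretely: take an uncoloured star K_{1,Δ} and attach to each leaf d pendant edges precoloured 1,...,d.) -/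
open SimpleGraph

namespace Statement2Aux

abbrev Vt (Δ d : ℕ) := Option (Fin Δ × Option (Fin d))

/-- The big graph: a star `K_{1,Δ}` with centre `none` and leaves `some (i, none)`, plus
pendant edges from each leaf to `some (i, some j)`. -/
def Gg (Δ d : ℕ) : SimpleGraph (Vt Δ d) :=
  SimpleGraph.fromRel (fun u v =>
    (u = none ∧ ∃ i, v = some (i, none)) ∨ (∃ i j, u = some (i, none) ∧ v = some (i, some j)))

/-- The precoloured subgraph: just the pendant edges. -/
def Hh (Δ d : ℕ) : SimpleGraph (Vt Δ d) :=
  SimpleGraph.fromRel (fun u v => ∃ i j, u = some (i, none) ∧ v = some (i, some j))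

def col {Δ d : ℕ} : Vt Δ d → ℕ
  | some (_, some j) => (j : ℕ) + 1
  | _ => 0

def C0 (Δ d : ℕ) : Sym2 (Vt Δ d) → ℕ :=
  Sym2.lift ⟨fun u v => max (col u) (col v), fun _ _ => max_comm _ _⟩

variable {Δ d : ℕ}

lemma Hh_adj {u v : Vt Δ d} :
    (Hh Δ d).Adj u v ↔ ∃ i j, (u = some (i, none) ∧ v = some (i, some j)) ∨
      (v = some (i, none) ∧ u = some (i, some j)) := by
  simp only [Hh, SimpleGraph.fromRel_adj]
  constructor
  · rintro ⟨-, (⟨i, j, h1, h2⟩ | ⟨i, j, h1, h2⟩)⟩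
    exacts [⟨i, j, Or.inl ⟨h1, h2⟩⟩, ⟨i, j, Or.inr ⟨h1, h2⟩⟩]
  · rintro ⟨i, j, (⟨h1, h2⟩ | ⟨h1, h2⟩)⟩ <;> subst h1 <;> subst h2
    · exact ⟨by simp, Or.inl ⟨i, j, rfl, rfl⟩⟩
    · exact ⟨by simp, Or.inr ⟨i, j, rfl, rfl⟩⟩

lemma Hh_edge_cases {e : Sym2 (Vt Δ d)} (he : e ∈ (Hh Δ d).edgeSet) :
    ∃ i j, e = s(some (i, none), some (i, some j)) := by
  induction e using Sym2.ind with
  | _ a b =>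
    rw [SimpleGraph.mem_edgeSet] at he
    rcases Hh_adj.1 he with ⟨i, j, (⟨h1, h2⟩ | ⟨h1, h2⟩)⟩ <;> subst h1 <;> subst h2
    · exact ⟨i, j, rfl⟩
    · exact ⟨i, j, Sym2.eq_swap⟩

lemma C0_pendant (i : Fin Δ) (j : Fin d) :
    C0 Δ d s(some (i, none), some (i, some j)) = (j : ℕ) + 1 := by
  simp [C0, col]

lemma Gg_adj_star (i : Fin Δ) : (Gg Δ d).Adj none (some (i, none)) := by
  simp only [Gg, SimpleGraph.fromRel_adj]
  exact ⟨by simp, Or.inl (Or.inl ⟨trivial, i, rfl⟩)⟩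

lemma Gg_adj_pendant (i : Fin Δ) (j : Fin d) :
    (Gg Δ d).Adj (some (i, none)) (some (i, some j)) := by
  simp only [Gg, SimpleGraph.fromRel_adj]
  exact ⟨by simp, Or.inl (Or.inr ⟨i, j, rfl, rfl⟩)⟩

lemma Hh_adj_pendant (i : Fin Δ) (j : Fin d) :
    (Hh Δ d).Adj (some (i, none)) (some (i, some j)) :=
  Hh_adj.2 ⟨i, j, Or.inl ⟨rfl, rfl⟩⟩

lemma Hh_le_Gg : Hh Δ d ≤ Gg Δ d := by
  intro u v h
  rcases Hh_adj.1 h with ⟨i, j, (⟨h1, h2⟩ | ⟨h1, h2⟩)⟩ <;> subst h1 <;> subst h2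
  · exact Gg_adj_pendant i j
  · exact (Gg_adj_pendant i j).symm

lemma nb_G_center : (Gg Δ d).neighborSet none =
    Set.range (fun i : Fin Δ => (some (i, none) : Vt Δ d)) := by
  ext v
  show (Gg Δ d).Adj none v ↔ _
  rw [Gg, SimpleGraph.fromRel_adj, Set.mem_range]
  constructor
  · rintro ⟨-, ((⟨-, i, rfl⟩ | ⟨i, j, h, -⟩) | (⟨-, i, h⟩ | ⟨i, j, -, h⟩))⟩
    · exact ⟨i, rfl⟩
    all_goals simp at h
  · rintro ⟨i, rfl⟩
    exact ⟨by simp, Or.inl (Or.inl ⟨rfl, i, rfl⟩)⟩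

lemma nb_G_leaf (i : Fin Δ) : (Gg Δ d).neighborSet (some (i, none)) =
    insert none (Set.range (fun j : Fin d => (some (i, some j) : Vt Δ d))) := by
  ext v
  show (Gg Δ d).Adj _ v ↔ _
  rw [Gg, SimpleGraph.fromRel_adj, Set.mem_insert_iff, Set.mem_range]
  constructor
  · rintro ⟨-, ((⟨h, -⟩ | ⟨i', j, h1, h2⟩) | (⟨h1, -⟩ | ⟨i', j, h1, h2⟩))⟩
    · simp at h
    · obtain ⟨rfl, -⟩ : i' = i ∧ (none : Option (Fin d)) = none := by
        simpa using h1.symm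
      exact Or.inr ⟨j, h2.symm⟩
    · exact Or.inl h1
    · simp at h2
  · rintro (rfl | ⟨j, rfl⟩)
    · exact ⟨by simp, Or.inr (Or.inl ⟨rfl, i, rfl⟩)⟩
    · exact ⟨by simp, Or.inl (Or.inr ⟨i, j, rfl, rfl⟩)⟩

lemma nb_G_pendant (i : Fin Δ) (j : Fin d) :
    (Gg Δ d).neighborSet (some (i, some j)) = {some (i, none)} := by
  ext v
  show (Gg Δ d).Adj _ v ↔ _
  rw [Gg, SimpleGraph.fromRel_adj, Set.mem_singleton_iff]
  constructor
  · rintro ⟨-, ((⟨h, -⟩ | ⟨i', j', h1, h2⟩) | (⟨-, i', h⟩ | ⟨i', j', h1, h2⟩))⟩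
    · simp at h
    · simp at h1
    · simp at h
    · obtain ⟨rfl, -⟩ : i' = i ∧ (some j' : Option (Fin d)) = some j := by
        simpa using h2.symm
      exact h1
  · rintro rfl
    exact ⟨by simp, Or.inr (Or.inr ⟨i, j, rfl, rfl⟩)⟩

lemma nb_H_center : (Hh Δ d).neighborSet none = ∅ := by
  ext v
  simp only [SimpleGraph.mem_neighborSet, Set.mem_empty_iff_false, iff_false]
  intro h
  rcases Hh_adj.1 h with ⟨i, j, (⟨h1, -⟩ | ⟨-, h1⟩)⟩ <;> simp at h1

lemma nb_H_leaf (i : Fin Δ) : (Hh Δ d).neighborSet (some (i, none)) =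
    Set.range (fun j : Fin d => (some (i, some j) : Vt Δ d)) := by
  ext v
  simp only [SimpleGraph.mem_neighborSet, Set.mem_range]
  constructor
  · intro h
    rcases Hh_adj.1 h with ⟨i', j, (⟨h1, h2⟩ | ⟨-, h2⟩)⟩
    · obtain ⟨rfl, -⟩ : i' = i ∧ (none : Option (Fin d)) = none := by simpa using h1.symm
      exact ⟨j, h2.symm⟩
    · simp at h2
  · rintro ⟨j, rfl⟩
    exact Hh_adj_pendant i j

lemma nb_H_pendant (i : Fin Δ) (j : Fin d) :
    (Hh Δ d).neighborSet (some (i, some j)) = {some (i, none)} := by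
  ext v
  simp only [SimpleGraph.mem_neighborSet, Set.mem_singleton_iff]
  constructor
  · intro h
    rcases Hh_adj.1 h with ⟨i', j', (⟨h1, -⟩ | ⟨h1, h2⟩)⟩
    · simp at h1
    · obtain ⟨rfl, -⟩ : i' = i ∧ (some j' : Option (Fin d)) = some j := by simpa using h2.symm
      exact h1
  · rintro rfl
    exact (Hh_adj_pendant i j).symm

lemma ncard_range_leaf : (Set.range (fun i : Fin Δ => (some (i, none) : Vt Δ d))).ncard = Δ := by
  rw [← Set.image_univ, Set.ncard_image_of_injective _ (by intro a b h; simpa using h),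
    Set.ncard_univ]
  simp

lemma ncard_range_pendant (i : Fin Δ) :
    (Set.range (fun j : Fin d => (some (i, some j) : Vt Δ d))).ncard = d := by
  rw [← Set.image_univ, Set.ncard_image_of_injective _ (by intro a b h; simpa using h),
    Set.ncard_univ]
  simp

end Statement2Aux

open Statement2Aux in
/-- for all Δ > d ≥ 1 there is a graph G of maximum degree Δ with a precoloured
subgraph H of maximum degree d, coloured with colours from {1,…,d}, such that for every
t < d the precolouring does not extend to a proper (Δ+t)-edge-colouring of G. -/
theorem statement2 (Δ d : ℕ) (hd : 1 ≤ d) (hdΔ : d < Δ) :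
    ∃ (V : Type) (_ : Fintype V) (G H : SimpleGraph V) (C₀ : Sym2 V → ℕ),
      H ≤ G ∧
      (∀ v, edeg G v ≤ Δ) ∧ (∃ v, edeg G v = Δ) ∧
      (∀ v, edeg H v ≤ d) ∧ (∃ v, edeg H v = d) ∧
      (∀ e ∈ H.edgeSet, C₀ e ∈ Finset.Icc 1 d) ∧
      (∀ e ∈ H.edgeSet, ∀ f ∈ H.edgeSet, EdgeAdj e f → C₀ e ≠ C₀ f) ∧
      ∀ t : ℕ, t < d →
        ¬ ∃ C : Sym2 V → ℕ,
            (∀ e ∈ G.edgeSet, C e ∈ Finset.Icc 1 (Δ + t)) ∧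
            (∀ e ∈ G.edgeSet, ∀ f ∈ G.edgeSet, EdgeAdj e f → C e ≠ C f) ∧
            (∀ e ∈ H.edgeSet, C e = C₀ e) := by
  refine ⟨Vt Δ d, inferInstance, Gg Δ d, Hh Δ d, C0 Δ d, Hh_le_Gg, ?_, ?_, ?_, ?_, ?_, ?_, ?_⟩
  · -- max degree of G
    rintro (_ | ⟨i, _ | j⟩)
    · rw [edeg, nb_G_center, ncard_range_leaf]
    · rw [edeg, nb_G_leaf]
      rw [Set.ncard_insert_of_notMem (by simp) (Set.toFinite _), ncard_range_pendant]
      omega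
    · rw [edeg, nb_G_pendant, Set.ncard_singleton]; omega
  · exact ⟨none, by rw [edeg, nb_G_center, ncard_range_leaf]⟩
  · -- max degree of H
    rintro (_ | ⟨i, _ | j⟩)
    · rw [edeg, nb_H_center, Set.ncard_empty]; omega
    · rw [edeg, nb_H_leaf, ncard_range_pendant]
    · rw [edeg, nb_H_pendant, Set.ncard_singleton]; omega
  · exact ⟨some (⟨0, by omega⟩, none), by rw [edeg, nb_H_leaf, ncard_range_pendant]⟩
  · -- colours of C0 in Icc 1 d
    intro e he
    obtain ⟨i, j, rfl⟩ := Hh_edge_cases he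
    rw [C0_pendant]
    have := j.isLt
    simp only [Finset.mem_Icc]
    omega
  · -- C0 proper on H
    intro e he f hf ⟨hef, v, hve, hvf⟩
    obtain ⟨i, j, rfl⟩ := Hh_edge_cases he
    obtain ⟨i', j', rfl⟩ := Hh_edge_cases hf
    rw [C0_pendant, C0_pendant]
    have hii' : i = i' ∧ ¬(j = j' ∧ i = i') := by
      refine ⟨?_, ?_⟩
      · rcases Sym2.mem_iff.1 hve with h | h <;> rcases Sym2.mem_iff.1 hvf with h' | h' <;>
          rw [h] at h' <;> simp_all
      · rintro ⟨rfl, rfl⟩; exact hef rfl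
    have : (j : ℕ) ≠ (j' : ℕ) := by
      intro h
      exact hii'.2 ⟨Fin.ext h, hii'.1⟩
    omega
  · -- non-extension
    rintro t ht ⟨C, hmem, hproper, hagree⟩
    set g : Fin Δ → ℕ := fun i => C s(none, some (i, none)) with hg
    have hstar : ∀ i : Fin Δ, s(none, (some (i, none) : Vt Δ d)) ∈ (Gg Δ d).edgeSet :=
      fun i => (Gg Δ d).mem_edgeSet.2 (Gg_adj_star i)
    have hpend : ∀ (i : Fin Δ) (j : Fin d),
        s((some (i, none) : Vt Δ d), some (i, some j)) ∈ (Gg Δ d).edgeSet :=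
      fun i j => (Gg Δ d).mem_edgeSet.2 (Gg_adj_pendant i j)
    have hpendH : ∀ (i : Fin Δ) (j : Fin d),
        s((some (i, none) : Vt Δ d), some (i, some j)) ∈ (Hh Δ d).edgeSet :=
      fun i j => (Hh Δ d).mem_edgeSet.2 (Hh_adj_pendant i j)
    -- each star colour avoids 1..d
    have hbig : ∀ i : Fin Δ, d + 1 ≤ g i ∧ g i ≤ Δ + t := by
      intro i
      have hIcc := Finset.mem_Icc.1 (hmem _ (hstar i))
      refine ⟨?_, hIcc.2⟩
      by_contra hlt
      push_neg at hlt
      have hj : g i - 1 < d := by omega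
      obtain ⟨j, hjval⟩ : ∃ j : Fin d, (j : ℕ) = g i - 1 := ⟨⟨g i - 1, hj⟩, rfl⟩
      have h1 : 1 ≤ g i := hIcc.1
      have hCf : C s((some (i, none) : Vt Δ d), some (i, some j)) = g i := by
        rw [hagree _ (hpendH i j), C0_pendant, hjval]
        omega
      have hadj : EdgeAdj s((none : Vt Δ d), some (i, none))
          s((some (i, none) : Vt Δ d), some (i, some j)) := by
        constructor
        · intro h
          rw [Sym2.eq_iff] at h
          simp at h
        · exact ⟨some (i, none), by simp, by simp⟩
      exact hproper _ (hstar i) _ (hpend i j) hadj hCf.symm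
    have ginj : Function.Injective g := by
      intro a b hab
      by_contra hne
      refine hproper _ (hstar a) _ (hstar b) ?_ hab
      constructor
      · intro h
        rw [Sym2.eq_iff] at h
        rcases h with ⟨-, h⟩ | ⟨h, -⟩
        · exact hne (by simpa using h)
        · simp at h
      · exact ⟨none, by simp, by simp⟩
    have hcard : (Finset.univ : Finset (Fin Δ)).card ≤ (Finset.Icc (d + 1) (Δ + t)).card := by
      refine Finset.card_le_card_of_injOn g (fun i _ => ?_) ginj.injOn
      exact Finset.mem_Icc.2 (hbig i)
    rw [Finset.card_univ, Fintype.card_fin, Nat.card_Icc] at hcard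
    omega
end

section
/- Let G be a bipartite (multi)graph and L an edge list assignment such that |L(xy)| ≥ max{deg(x), deg(y)} for every edge xy. Then G has a proper L-edge-colouring. -/
namespace BKW
open Finset

variable {V : Type} [DecidableEq V]

def degL (E : Finset (V × V)) (u : V) : ℕ := (E.filter (fun p => p.1 = u)).card
def degR (E : Finset (V × V)) (v : V) : ℕ := (E.filter (fun p => p.2 = v)).card
def cntA (E : Finset (V × V)) (c : V × V → ℤ) (e : V × V) : ℕ :=
  (E.filter (fun f => f.1 = e.1 ∧ c f < c e)).card
def cntB (E : Finset (V × V)) (c : V × V → ℤ) (e : V × V) : ℕ :=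
  (E.filter (fun f => f.2 = e.2 ∧ c e < c f)).card
def Proper (E : Finset (V × V)) (c : V × V → ℤ) : Prop :=
  ∀ e ∈ E, ∀ f ∈ E, e ≠ f → (e.1 = f.1 ∨ e.2 = f.2) → c e ≠ c f
def Matching (M : Finset (V × V)) : Prop :=
  ∀ e ∈ M, ∀ f ∈ M, e ≠ f → e.1 ≠ f.1 ∧ e.2 ≠ f.2
def GoodC (E : Finset (V × V)) (c : V × V → ℤ) : Prop :=
  Proper E c ∧ ∀ e ∈ E, cntA E c e + cntB E c e + 1 ≤ max (degL E e.1) (degR E e.2)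


lemma card_filter_split (E M : Finset (V × V)) (hME : M ⊆ E) (P : V × V → Prop)
    [DecidablePred P] :
    (E.filter P).card = ((E \ M).filter P).card + (M.filter P).card := by
  rw [← card_union_of_disjoint (disjoint_filter_filter sdiff_disjoint),
    ← filter_union, sdiff_union_of_subset hME]

/-- The insertion step: remove a matching `M`, colour the rest, and place each `M`-edge
at the very bottom (σ=true : colour `lo`, top at left end) or the very top
(σ=false : colour `hi`, top at right end). -/
theorem insert_step (E M : Finset (V × V)) (σ : V × V → Bool) (hME : M ⊆ E)
    (hmatch : Matching M)
    (hα : ∀ g ∈ E, g ∉ M → ∀ m₁ ∈ M, ∀ m₂ ∈ M, m₁.1 = g.1 → m₂.2 = g.2 →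
      σ m₁ = true → σ m₂ = false → False)
    (hβL : ∀ g ∈ E, g ∉ M → ∀ m ∈ M, m.1 = g.1 → σ m = true →
      (∃ m₂ ∈ M, m₂.2 = g.2) ∨ degR E g.2 + 1 ≤ degL E g.1)
    (hβR : ∀ g ∈ E, g ∉ M → ∀ m ∈ M, m.2 = g.2 → σ m = false →
      (∃ m₂ ∈ M, m₂.1 = g.1) ∨ degL E g.1 + 1 ≤ degR E g.2)
    (c' : V × V → ℤ) (h' : GoodC (E \ M) c') : ∃ c, GoodC E c := by
  classical
  obtain ⟨hprop', hbound'⟩ := h'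
  -- bounds for the colours used on E \ M
  obtain ⟨lo, hi, hlohi⟩ : ∃ lo hi : ℤ, ∀ f ∈ E \ M, lo < c' f ∧ c' f < hi := by
    rcases (E \ M).eq_empty_or_nonempty with h0 | h0
    · exact ⟨0, 1, by simp [h0]⟩
    · have himg : ((E \ M).image c').Nonempty := h0.image c'
      refine ⟨((E \ M).image c').min' himg - 1, ((E \ M).image c').max' himg + 1, ?_⟩
      intro f hf
      have h1 := min'_le _ _ (mem_image_of_mem c' hf)
      have h2 := le_max' _ _ (mem_image_of_mem c' hf)
      omega
  set c : V × V → ℤ := fun p => if p ∈ M then (if σ p then lo else hi) else c' p with hc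
  have hcM : ∀ m ∈ M, c m = if σ m then lo else hi := by
    intro m hm; simp [hc, hm]
  have hcE' : ∀ f ∈ E \ M, c f = c' f := by
    intro f hf
    have : f ∉ M := (mem_sdiff.mp hf).2
    simp [hc, this]
  refine ⟨c, ?_, ?_⟩
  · -- properness
    intro e he f hf hef hadj
    by_cases heM : e ∈ M <;> by_cases hfM : f ∈ M
    · obtain ⟨h1, h2⟩ := hmatch e heM f hfM hef; tauto
    · have hfE' : f ∈ E \ M := mem_sdiff.mpr ⟨hf, hfM⟩
      rw [hcM e heM, hcE' f hfE']
      obtain ⟨h1, h2⟩ := hlohi f hfE'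
      by_cases hσ : σ e <;> simp [hσ] <;> omega
    · have heE' : e ∈ E \ M := mem_sdiff.mpr ⟨he, heM⟩
      rw [hcM f hfM, hcE' e heE']
      obtain ⟨h1, h2⟩ := hlohi e heE'
      by_cases hσ : σ f <;> simp [hσ] <;> omega
    · rw [hcE' e (mem_sdiff.mpr ⟨he, heM⟩), hcE' f (mem_sdiff.mpr ⟨hf, hfM⟩)]
      exact hprop' e (mem_sdiff.mpr ⟨he, heM⟩) f (mem_sdiff.mpr ⟨hf, hfM⟩) hef hadj
  · -- the count bound
    intro e he
    by_cases heM : e ∈ M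
    · -- M-edges : one side count is zero
      have hceq : c e = if σ e then lo else hi := hcM e heM
      by_cases hσ : σ e
      · -- c e = lo : cntA = 0
        have hA : cntA E c e = 0 := by
          unfold cntA
          rw [card_eq_zero, filter_eq_empty_iff]
          intro f hf
          by_cases hfM : f ∈ M
          · rcases eq_or_ne f e with rfl | hne
            · simp
            · intro hcon
              exact absurd hcon.1 (hmatch f hfM e heM hne).1
          · intro hcon
            have := (hlohi f (mem_sdiff.mpr ⟨hf, hfM⟩)).1
            rw [hcE' f (mem_sdiff.mpr ⟨hf, hfM⟩)] at hcon
            rw [hceq] at hcon; simp [hσ] at hcon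
            omega
        have hB : cntB E c e + 1 ≤ degR E e.2 := by
          have hsub : E.filter (fun f => f.2 = e.2 ∧ c e < c f) ⊆
              (E.filter (fun p => p.2 = e.2)).erase e := by
            intro a ha
            rw [mem_filter] at ha
            refine mem_erase.mpr ⟨?_, mem_filter.mpr ⟨ha.1, ha.2.1⟩⟩
            rintro rfl; exact absurd ha.2.2 (lt_irrefl _)
          have h1 := card_le_card hsub
          have h2 : e ∈ E.filter (fun p => p.2 = e.2) := mem_filter.mpr ⟨he, rfl⟩
          have h3 := card_erase_of_mem h2
          have h4 := card_pos.mpr ⟨e, h2⟩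
          unfold cntB degR
          omega
        have := le_max_right (degL E e.1) (degR E e.2)
        omega
      · -- c e = hi : cntB = 0
        have hB : cntB E c e = 0 := by
          unfold cntB
          rw [card_eq_zero, filter_eq_empty_iff]
          intro f hf
          by_cases hfM : f ∈ M
          · rcases eq_or_ne f e with rfl | hne
            · simp
            · intro hcon
              exact absurd hcon.1 (hmatch f hfM e heM hne).2
          · intro hcon
            have := (hlohi f (mem_sdiff.mpr ⟨hf, hfM⟩)).2
            rw [hcE' f (mem_sdiff.mpr ⟨hf, hfM⟩)] at hcon
            rw [hceq] at hcon; simp [hσ] at hcon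
            omega
        have hA : cntA E c e + 1 ≤ degL E e.1 := by
          have hsub : E.filter (fun f => f.1 = e.1 ∧ c f < c e) ⊆
              (E.filter (fun p => p.1 = e.1)).erase e := by
            intro a ha
            rw [mem_filter] at ha
            refine mem_erase.mpr ⟨?_, mem_filter.mpr ⟨ha.1, ha.2.1⟩⟩
            rintro rfl; exact absurd ha.2.2 (lt_irrefl _)
          have h1 := card_le_card hsub
          have h2 : e ∈ E.filter (fun p => p.1 = e.1) := mem_filter.mpr ⟨he, rfl⟩
          have h3 := card_erase_of_mem h2
          have h4 := card_pos.mpr ⟨e, h2⟩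
          unfold cntA degL
          omega
        have := le_max_left (degL E e.1) (degR E e.2)
        omega
    · -- non-M edges
      have heE' : e ∈ E \ M := mem_sdiff.mpr ⟨he, heM⟩
      have hceq : c e = c' e := hcE' e heE'
      -- split all the counts
      have hsplitA := card_filter_split E M hME (fun f => f.1 = e.1 ∧ c f < c e)
      have hsplitB := card_filter_split E M hME (fun f => f.2 = e.2 ∧ c e < c f)
      have hsplitL := card_filter_split E M hME (fun p => p.1 = e.1)
      have hsplitR := card_filter_split E M hME (fun p => p.2 = e.2)
      -- the E\M parts agree with the c' counts
      have hAE' : ((E \ M).filter (fun f => f.1 = e.1 ∧ c f < c e)).card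
          = cntA (E \ M) c' e := by
        unfold cntA
        apply card_bij (fun a _ => a)
        · intro a ha
          rw [mem_filter] at ha ⊢
          exact ⟨ha.1, ha.2.1, by rw [← hcE' a ha.1, ← hceq]; exact ha.2.2⟩
        · intro a _ b _ h; exact h
        · intro b hb
          rw [mem_filter] at hb
          exact ⟨b, mem_filter.mpr ⟨hb.1, hb.2.1, by rw [hcE' b hb.1, hceq]; exact hb.2.2⟩, rfl⟩
      have hBE' : ((E \ M).filter (fun f => f.2 = e.2 ∧ c e < c f)).card
          = cntB (E \ M) c' e := by
        unfold cntB
        apply card_bij (fun a _ => a)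
        · intro a ha
          rw [mem_filter] at ha ⊢
          exact ⟨ha.1, ha.2.1, by rw [← hcE' a ha.1, ← hceq]; exact ha.2.2⟩
        · intro a _ b _ h; exact h
        · intro b hb
          rw [mem_filter] at hb
          exact ⟨b, mem_filter.mpr ⟨hb.1, hb.2.1, by rw [hcE' b hb.1, hceq]; exact hb.2.2⟩, rfl⟩
      -- M parts
      have hMA : (M.filter (fun f => f.1 = e.1 ∧ c f < c e)).card
          = (M.filter (fun m => m.1 = e.1 ∧ σ m = true)).card := by
        congr 1
        apply filter_congr
        intro m hm
        rw [hcM m hm, hceq]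
        have h1 := (hlohi e heE').1
        have h2 := (hlohi e heE').2
        by_cases hσ : σ m <;> simp [hσ] <;> intros <;> omega
      have hMB : (M.filter (fun f => f.2 = e.2 ∧ c e < c f)).card
          = (M.filter (fun m => m.2 = e.2 ∧ σ m = false)).card := by
        congr 1
        apply filter_congr
        intro m hm
        rw [hcM m hm, hceq]
        have h1 := (hlohi e heE').1
        have h2 := (hlohi e heE').2
        by_cases hσ : σ m <;> simp [hσ] <;> intros <;> omega
      -- abbreviations
      set a := (M.filter (fun m => m.1 = e.1 ∧ σ m = true)).card with ha
      set b := (M.filter (fun m => m.2 = e.2 ∧ σ m = false)).card with hb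
      set l := (M.filter (fun p => p.1 = e.1)).card with hl
      set r := (M.filter (fun p => p.2 = e.2)).card with hr
      have hal : a ≤ l := card_le_card (by
        intro x hx
        rw [mem_filter] at hx ⊢
        exact ⟨hx.1, hx.2.1⟩)
      have hbr : b ≤ r := card_le_card (by
        intro x hx
        rw [mem_filter] at hx ⊢
        exact ⟨hx.1, hx.2.1⟩)
      have hl1 : l ≤ 1 := by
        rw [hl, card_le_one]
        intro x hx y hy
        rw [mem_filter] at hx hy
        by_contra hne
        exact (hmatch x hx.1 y hy.1 hne).1 (hx.2.trans hy.2.symm)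
      have hr1 : r ≤ 1 := by
        rw [hr, card_le_one]
        intro x hx y hy
        rw [mem_filter] at hx hy
        by_contra hne
        exact (hmatch x hx.1 y hy.1 hne).2 (hx.2.trans hy.2.symm)
      have IH := hbound' e heE'
      set CA := cntA (E \ M) c' e with hCA
      set CB := cntB (E \ M) c' e with hCB
      set dL' := degL (E \ M) e.1 with hdL'
      set dR' := degR (E \ M) e.2 with hdR'
      have egoal1 : cntA E c e = CA + a := by
        unfold cntA; rw [hsplitA, hAE', hMA]
      have egoal2 : cntB E c e = CB + b := by
        unfold cntB; rw [hsplitB, hBE', hMB]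
      have egoal3 : degL E e.1 = dL' + l := hsplitL
      have egoal4 : degR E e.2 = dR' + r := hsplitR
      rw [egoal1, egoal2, egoal3, egoal4]
      -- case analysis on a and b
      have hax : a = 0 ∨ a = 1 := by omega
      have hbx : b = 0 ∨ b = 1 := by omega
      rcases hax with ha0 | ha1
      · rcases hbx with hb0 | hb1
        · -- no hurts
          rw [ha0, hb0]
          calc CA + 0 + (CB + 0) + 1 ≤ max dL' dR' := by simpa using IH
          _ ≤ max (dL' + l) (dR' + r) :=
            max_le_max (Nat.le_add_right _ _) (Nat.le_add_right _ _)
        · -- a = 0, b = 1 : use hβR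
          have : (M.filter (fun m => m.2 = e.2 ∧ σ m = false)).Nonempty := by
            rw [← card_pos, ← hb]; omega
          obtain ⟨m₂, hm₂⟩ := this
          rw [mem_filter] at hm₂
          obtain ⟨hm₂M, hm₂2, hm₂σ⟩ := hm₂
          rcases hβR e he heM m₂ hm₂M hm₂2 hm₂σ with ⟨m₁, hm₁M, hm₁1⟩ | hdeg
          · have hl1' : 1 ≤ l := by
              rw [hl]
              exact card_pos.mpr ⟨m₁, mem_filter.mpr ⟨hm₁M, hm₁1⟩⟩
            have hleq : l = 1 := by omega
            have hreq : r = 1 := by omega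
            rw [ha0, hb1, hreq, hleq]
            calc CA + 0 + (CB + 1) + 1 = (CA + CB + 1) + 1 := by ring
            _ ≤ max dL' dR' + 1 := by omega
            _ = max (dL' + 1) (dR' + 1) := (max_add_add_right _ _ _).symm
          · have hdeg' : dL' + l + 1 ≤ dR' + r := by
              rw [← egoal3, ← egoal4]; exact hdeg
            have hreq : r = 1 := by omega
            refine le_trans ?_ (le_max_right (dL' + l) (dR' + r))
            rcases max_choice dL' dR' with hY | hY <;> rw [hY] at IH <;> omega
      · -- a = 1 : get the witness m₁
        have : (M.filter (fun m => m.1 = e.1 ∧ σ m = true)).Nonempty := by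
          rw [← card_pos, ← ha]; omega
        obtain ⟨m₁, hm₁⟩ := this
        rw [mem_filter] at hm₁
        obtain ⟨hm₁M, hm₁1, hm₁σ⟩ := hm₁
        rcases hbx with hb0 | hb1
        · -- a = 1, b = 0 : use hβL
          rcases hβL e he heM m₁ hm₁M hm₁1 hm₁σ with ⟨m₂, hm₂M, hm₂2⟩ | hdeg
          · -- right end covered : r = 1
            have hr1' : 1 ≤ r := by
              rw [hr]
              exact card_pos.mpr ⟨m₂, mem_filter.mpr ⟨hm₂M, hm₂2⟩⟩
            have hreq : r = 1 := by omega
            have hleq : l = 1 := by omega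
            rw [ha1, hb0, hreq, hleq]
            calc CA + 1 + (CB + 0) + 1 = (CA + CB + 1) + 1 := by ring
            _ ≤ max dL' dR' + 1 := by omega
            _ = max (dL' + 1) (dR' + 1) := (max_add_add_right _ _ _).symm
          · -- degree condition
            have hdeg' : dR' + r + 1 ≤ dL' + l := by
              rw [← egoal3, ← egoal4]; exact hdeg
            have hleq : l = 1 := by omega
            refine le_trans ?_ (le_max_left (dL' + l) (dR' + r))
            rcases max_choice dL' dR' with hY | hY <;> rw [hY] at IH <;> omega
        · -- a = 1, b = 1 : contradiction via hα
          have : (M.filter (fun m => m.2 = e.2 ∧ σ m = false)).Nonempty := by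
            rw [← card_pos, ← hb]; omega
          obtain ⟨m₂, hm₂⟩ := this
          rw [mem_filter] at hm₂
          exact absurd (hα e he heM m₁ hm₁M m₂ hm₂.1 hm₁1 hm₂.2.1 hm₁σ hm₂.2.2) not_false
      -- remaining : a = 0, b = 1 handled below


/-- König-type package: a matching and a vertex cover such that every matching edge
has exactly one endpoint in the cover, and every cover vertex is saturated. -/
theorem cover_package (J : Finset (V × V)) (hJ : J.Nonempty) :
    ∃ (M : Finset (V × V)) (WA WB : Finset V),
      M ⊆ J ∧ M.Nonempty ∧ Matching M ∧
      (∀ g ∈ J, g.1 ∈ WA ∨ g.2 ∈ WB) ∧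
      (∀ m ∈ M, (m.1 ∈ WA ∧ m.2 ∉ WB) ∨ (m.1 ∉ WA ∧ m.2 ∈ WB)) ∧
      (∀ w ∈ WA, ∃ m ∈ M, m.1 = w) ∧ (∀ w ∈ WB, ∃ m ∈ M, m.2 = w) := by
  classical
  set JA := J.image Prod.fst with hJA
  set JB := J.image Prod.snd with hJB
  set 𝒞 : Finset (Finset V × Finset V) :=
    (JA.powerset ×ˢ JB.powerset).filter (fun W => ∀ g ∈ J, g.1 ∈ W.1 ∨ g.2 ∈ W.2) with h𝒞
  have h𝒞ne : 𝒞.Nonempty := by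
    refine ⟨(JA, ∅), mem_filter.mpr ⟨mem_product.mpr ⟨mem_powerset.mpr subset_rfl,
      mem_powerset.mpr (empty_subset _)⟩, ?_⟩⟩
    intro g hg
    exact Or.inl (mem_image_of_mem _ hg)
  obtain ⟨W, hW𝒞, hWmin⟩ := 𝒞.exists_min_image (fun W => W.1.card + W.2.card) h𝒞ne
  rw [h𝒞, mem_filter, mem_product] at hW𝒞
  obtain ⟨⟨hWA_sub, hWB_sub⟩, hcov⟩ := hW𝒞
  rw [mem_powerset] at hWA_sub hWB_sub
  set WA := W.1 with hWA
  set WB := W.2 with hWB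
  -- Hall condition on the left part of the cover
  have hallA : ∀ s : Finset {x // x ∈ WA},
      s.card ≤ (s.biUnion (fun x =>
        (J.filter (fun g => g.1 = x.1 ∧ g.2 ∉ WB)).image Prod.snd)).card := by
    intro s
    by_contra hcon
    push_neg at hcon
    set N := s.biUnion (fun x =>
      (J.filter (fun g => g.1 = x.1 ∧ g.2 ∉ WB)).image Prod.snd) with hN
    have hNJB : N ⊆ JB := by
      intro y hy
      rw [hN, mem_biUnion] at hy
      obtain ⟨x, -, hy⟩ := hy
      rw [mem_image] at hy
      obtain ⟨g, hg, rfl⟩ := hy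
      exact mem_image_of_mem _ (mem_of_mem_filter g hg)
    have hW'cov : ∀ g ∈ J, g.1 ∈ WA \ s.image (fun x => x.1) ∨ g.2 ∈ WB ∪ N := by
      intro g hg
      by_cases h1 : g.1 ∈ WA
      · by_cases h2 : g.1 ∈ s.image (fun x => x.1)
        · right
          by_cases h3 : g.2 ∈ WB
          · exact mem_union_left _ h3
          · rw [mem_image] at h2
            obtain ⟨x, hx, hxg⟩ := h2
            refine mem_union_right _ ?_
            rw [hN, mem_biUnion]
            exact ⟨x, hx, mem_image_of_mem _ (mem_filter.mpr ⟨hg, hxg.symm, h3⟩)⟩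
        · exact Or.inl (mem_sdiff.mpr ⟨h1, h2⟩)
      · rcases hcov g hg with h | h
        · exact absurd h h1
        · exact Or.inr (mem_union_left _ h)
    have hW'mem : (WA \ s.image (fun x => x.1), WB ∪ N) ∈ 𝒞 := by
      rw [h𝒞, mem_filter, mem_product]
      exact ⟨⟨mem_powerset.mpr ((sdiff_subset).trans hWA_sub),
        mem_powerset.mpr (union_subset hWB_sub hNJB)⟩, hW'cov⟩
    have hmin := hWmin _ hW'mem
    have himg : (s.image (fun x => x.1)).card = s.card :=
      card_image_of_injective _ Subtype.val_injective
    have hsub2 : s.image (fun x => x.1) ⊆ WA := by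
      intro y hy
      rw [mem_image] at hy
      obtain ⟨x, -, rfl⟩ := hy
      exact x.2
    have h1 : (WA \ s.image (fun x => x.1)).card = WA.card - s.card := by
      rw [card_sdiff_of_subset hsub2, himg]
    have h2 : (WB ∪ N).card ≤ WB.card + N.card := card_union_le _ _
    have h3 : s.card ≤ WA.card := by
      rw [← himg]; exact card_le_card hsub2
    simp only [h1] at hmin
    omega
  obtain ⟨fA, hfAinj, hfAmem⟩ :=
    (Finset.all_card_le_biUnion_card_iff_exists_injective _).mp hallA
  -- Hall condition on the right part of the cover
  have hallB : ∀ s : Finset {y // y ∈ WB},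
      s.card ≤ (s.biUnion (fun y =>
        (J.filter (fun g => g.2 = y.1 ∧ g.1 ∉ WA)).image Prod.fst)).card := by
    intro s
    by_contra hcon
    push_neg at hcon
    set N := s.biUnion (fun y =>
      (J.filter (fun g => g.2 = y.1 ∧ g.1 ∉ WA)).image Prod.fst) with hN
    have hNJA : N ⊆ JA := by
      intro x hx
      rw [hN, mem_biUnion] at hx
      obtain ⟨y, -, hx⟩ := hx
      rw [mem_image] at hx
      obtain ⟨g, hg, rfl⟩ := hx
      exact mem_image_of_mem _ (mem_of_mem_filter g hg)
    have hW'cov : ∀ g ∈ J, g.1 ∈ WA ∪ N ∨ g.2 ∈ WB \ s.image (fun y => y.1) := by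
      intro g hg
      by_cases h1 : g.2 ∈ WB
      · by_cases h2 : g.2 ∈ s.image (fun y => y.1)
        · left
          by_cases h3 : g.1 ∈ WA
          · exact mem_union_left _ h3
          · rw [mem_image] at h2
            obtain ⟨y, hy, hyg⟩ := h2
            refine mem_union_right _ ?_
            rw [hN, mem_biUnion]
            exact ⟨y, hy, mem_image_of_mem _ (mem_filter.mpr ⟨hg, hyg.symm, h3⟩)⟩
        · exact Or.inr (mem_sdiff.mpr ⟨h1, h2⟩)
      · rcases hcov g hg with h | h
        · exact Or.inl (mem_union_left _ h)
        · exact absurd h h1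
    have hW'mem : (WA ∪ N, WB \ s.image (fun y => y.1)) ∈ 𝒞 := by
      rw [h𝒞, mem_filter, mem_product]
      exact ⟨⟨mem_powerset.mpr (union_subset hWA_sub hNJA),
        mem_powerset.mpr ((sdiff_subset).trans hWB_sub)⟩, hW'cov⟩
    have hmin := hWmin _ hW'mem
    have himg : (s.image (fun y => y.1)).card = s.card :=
      card_image_of_injective _ Subtype.val_injective
    have hsub2 : s.image (fun y => y.1) ⊆ WB := by
      intro x hx
      rw [mem_image] at hx
      obtain ⟨y, -, rfl⟩ := hx
      exact y.2
    have h1 : (WB \ s.image (fun y => y.1)).card = WB.card - s.card := by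
      rw [card_sdiff_of_subset hsub2, himg]
    have h2 : (WA ∪ N).card ≤ WA.card + N.card := card_union_le _ _
    have h3 : s.card ≤ WB.card := by
      rw [← himg]; exact card_le_card hsub2
    simp only [h1] at hmin
    omega
  obtain ⟨fB, hfBinj, hfBmem⟩ :=
    (Finset.all_card_le_biUnion_card_iff_exists_injective _).mp hallB
  -- specs of fA, fB
  have hfAspec : ∀ x : {x // x ∈ WA}, (x.1, fA x) ∈ J ∧ fA x ∉ WB := by
    intro x
    have := hfAmem x
    rw [mem_image] at this
    obtain ⟨g, hg, hg2⟩ := this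
    rw [mem_filter] at hg
    have : g = (x.1, fA x) := by
      rw [Prod.ext_iff]; exact ⟨hg.2.1, hg2⟩
    rw [← this]
    exact ⟨hg.1, by rw [hg2] at hg; exact hg.2.2⟩
  have hfBspec : ∀ y : {y // y ∈ WB}, (fB y, y.1) ∈ J ∧ fB y ∉ WA := by
    intro y
    have := hfBmem y
    rw [mem_image] at this
    obtain ⟨g, hg, hg2⟩ := this
    rw [mem_filter] at hg
    have : g = (fB y, y.1) := by
      rw [Prod.ext_iff]; exact ⟨hg2, hg.2.1⟩
    rw [← this]
    exact ⟨hg.1, by rw [hg2] at hg; exact hg.2.2⟩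
  set MA : Finset (V × V) := WA.attach.image (fun x => (x.1, fA x)) with hMA
  set MB : Finset (V × V) := WB.attach.image (fun y => (fB y, y.1)) with hMB
  have hMAspec : ∀ m ∈ MA, m ∈ J ∧ m.1 ∈ WA ∧ m.2 ∉ WB := by
    intro m hm
    rw [hMA, mem_image] at hm
    obtain ⟨x, -, rfl⟩ := hm
    exact ⟨(hfAspec x).1, x.2, (hfAspec x).2⟩
  have hMBspec : ∀ m ∈ MB, m ∈ J ∧ m.2 ∈ WB ∧ m.1 ∉ WA := by
    intro m hm
    rw [hMB, mem_image] at hm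
    obtain ⟨y, -, rfl⟩ := hm
    exact ⟨(hfBspec y).1, y.2, (hfBspec y).2⟩
  refine ⟨MA ∪ MB, WA, WB, ?_, ?_, ?_, hcov, ?_, ?_, ?_⟩
  · intro m hm
    rcases mem_union.mp hm with h | h
    · exact (hMAspec m h).1
    · exact (hMBspec m h).1
  · obtain ⟨g, hg⟩ := hJ
    rcases hcov g hg with h | h
    · exact ⟨(g.1, fA ⟨g.1, h⟩), mem_union_left _ (mem_image_of_mem _ (mem_attach _ ⟨g.1, h⟩))⟩
    · exact ⟨(fB ⟨g.2, h⟩, g.2), mem_union_right _ (mem_image_of_mem _ (mem_attach _ ⟨g.2, h⟩))⟩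
  · -- matching
    intro e he f hf hef
    rcases mem_union.mp he with he' | he' <;> rcases mem_union.mp hf with hf' | hf'
    · rw [hMA, mem_image] at he' hf'
      obtain ⟨x, -, rfl⟩ := he'
      obtain ⟨x', -, rfl⟩ := hf'
      have hxx : x ≠ x' := by rintro rfl; exact hef rfl
      constructor
      · simpa using fun h => hxx (Subtype.ext h)
      · simpa using fun h => hxx (hfAinj h)
    · constructor
      · intro h
        exact (hMBspec f hf').2.2 (h ▸ (hMAspec e he').2.1)
      · intro h
        exact (hMAspec e he').2.2 (h.symm ▸ (hMBspec f hf').2.1)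
    · constructor
      · intro h
        exact (hMBspec e he').2.2 (h.symm ▸ (hMAspec f hf').2.1)
      · intro h
        exact (hMAspec f hf').2.2 (h ▸ (hMBspec e he').2.1)
    · rw [hMB, mem_image] at he' hf'
      obtain ⟨y, -, rfl⟩ := he'
      obtain ⟨y', -, rfl⟩ := hf'
      have hyy : y ≠ y' := by rintro rfl; exact hef rfl
      constructor
      · simpa using fun h => hyy (hfBinj h)
      · simpa using fun h => hyy (Subtype.ext h)
  · intro m hm
    rcases mem_union.mp hm with h | h
    · exact Or.inl ⟨(hMAspec m h).2.1, (hMAspec m h).2.2⟩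
    · exact Or.inr ⟨(hMBspec m h).2.2, (hMBspec m h).2.1⟩
  · intro w hw
    exact ⟨(w, fA ⟨w, hw⟩), mem_union_left _ (mem_image_of_mem _ (mem_attach _ ⟨w, hw⟩)), rfl⟩
  · intro w hw
    exact ⟨(fB ⟨w, hw⟩, w), mem_union_right _ (mem_image_of_mem _ (mem_attach _ ⟨w, hw⟩)), rfl⟩


/-- Existence of a good ordering/colouring for every finite pair-graph. -/
theorem exists_good (n : ℕ) : ∀ E : Finset (V × V), E.card = n → ∃ c, GoodC E c := by
  induction n using Nat.strong_induction_on with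
  | _ n IH =>
    intro E hcard
    rcases eq_or_ne E ∅ with rfl | hne
    · exact ⟨fun _ => 0, fun e he => absurd he (notMem_empty e), fun e he => absurd he (notMem_empty e)⟩
    classical
    have hEne : E.Nonempty := nonempty_iff_ne_empty.mpr hne
    set Δ := (E.image (fun p => max (degL E p.1) (degR E p.2))).max' (hEne.image _) with hΔ
    have hglob : ∀ p ∈ E, degL E p.1 ≤ Δ ∧ degR E p.2 ≤ Δ := by
      intro p hp
      have := le_max' _ _ (mem_image_of_mem (fun p => max (degL E p.1) (degR E p.2)) hp)
      exact ⟨le_trans (le_max_left _ _) this, le_trans (le_max_right _ _) this⟩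
    set J := E.filter (fun p => degL E p.1 = Δ ∧ degR E p.2 = Δ) with hJ
    have hJE : J ⊆ E := filter_subset _ _
    rcases J.eq_empty_or_nonempty with hJ0 | hJne
    · -- no edge between two maximum-degree vertices : remove a single edge
      obtain ⟨p₀, hp₀E, hp₀max⟩ : ∃ p₀ ∈ E, max (degL E p₀.1) (degR E p₀.2) = Δ := by
        have := max'_mem (E.image (fun p => max (degL E p.1) (degR E p.2))) (hEne.image _)
        rw [← hΔ, mem_image] at this
        obtain ⟨p₀, h1, h2⟩ := this
        exact ⟨p₀, h1, h2⟩
      set M : Finset (V × V) := {p₀} with hM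
      have hME : M ⊆ E := by simp [hM, hp₀E]
      have hmatch : Matching M := by
        intro e he f hf hef
        rw [hM, mem_singleton] at he hf
        exact absurd (he.trans hf.symm) hef
      set σ : V × V → Bool := fun _ => if degL E p₀.1 = Δ then true else false with hσdef
      have hcard' : (E \ M).card < n := by
        rw [← hcard]
        apply card_lt_card
        rw [ssubset_iff_of_subset sdiff_subset]
        exact ⟨p₀, hp₀E, by simp [hM]⟩
      obtain ⟨c', hc'⟩ := IH (E \ M).card (by omega) (E \ M) rfl
      apply insert_step E M σ hME hmatch ?_ ?_ ?_ c' hc'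
      · intro g hg hgM m₁ hm₁ m₂ hm₂ h1 h2 hσ1 hσ2
        rw [hM, mem_singleton] at hm₁ hm₂
        rw [hm₁] at hσ1; rw [hm₂] at hσ2
        rw [hσ1] at hσ2; simp at hσ2
      · intro g hg hgM m hm h1 hσ1
        rw [hM, mem_singleton] at hm
        have hdL : degL E p₀.1 = Δ := by
          by_contra h
          simp [hσdef, h] at hσ1
        right
        have hgL : degL E g.1 = Δ := by rw [← h1, hm]; exact hdL
        have hgR := (hglob g hg).2
        have : degR E g.2 ≠ Δ := by
          intro h
          have : g ∈ J := mem_filter.mpr ⟨hg, hgL, h⟩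
          rw [hJ0] at this
          exact notMem_empty g this
        rw [hgL]
        omega
      · intro g hg hgM m hm h2 hσ2
        rw [hM, mem_singleton] at hm
        have hdL : degL E p₀.1 ≠ Δ := by
          by_contra h
          simp [hσdef, h] at hσ2
        have hdR : degR E p₀.2 = Δ := by
          have h1 := (hglob p₀ hp₀E).1
          rcases max_choice (degL E p₀.1) (degR E p₀.2) with h | h <;> rw [h] at hp₀max
          · exact absurd hp₀max hdL
          · exact hp₀max
        right
        have hgR : degR E g.2 = Δ := by rw [← h2, hm]; exact hdR
        have hgL := (hglob g hg).1
        have : degL E g.1 ≠ Δ := by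
          intro h
          have : g ∈ J := mem_filter.mpr ⟨hg, h, hgR⟩
          rw [hJ0] at this
          exact notMem_empty g this
        rw [hgR]
        omega
    · -- J nonempty : use the König package
      obtain ⟨M, WA, WB, hMJ, hMne, hmatch, hcov, hone, hsatA, hsatB⟩ := cover_package J hJne
      have hME : M ⊆ E := hMJ.trans hJE
      set σ : V × V → Bool := fun m => if m.1 ∈ WA then false else true with hσdef
      have hσtrue : ∀ m, σ m = true → m.1 ∉ WA := by
        intro m hσ1
        by_contra h
        simp [hσdef, h] at hσ1
      have hσfalse : ∀ m, σ m = false → m.1 ∈ WA := by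
        intro m hσ1
        by_contra h
        simp [hσdef, h] at hσ1
      have hcard' : (E \ M).card < n := by
        rw [← hcard]
        apply card_lt_card
        rw [ssubset_iff_of_subset sdiff_subset]
        obtain ⟨m, hm⟩ := hMne
        exact ⟨m, hME hm, by simp [hm]⟩
      obtain ⟨c', hc'⟩ := IH (E \ M).card (by omega) (E \ M) rfl
      apply insert_step E M σ hME hmatch ?_ ?_ ?_ c' hc'
      · -- hα
        intro g hg hgM m₁ hm₁ m₂ hm₂ h1 h2 hσ1 hσ2
        have hm₁J := hMJ hm₁
        have hm₂J := hMJ hm₂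
        rw [hJ, mem_filter] at hm₁J hm₂J
        have hgJ : g ∈ J := by
          rw [hJ, mem_filter]
          exact ⟨hg, by rw [← h1]; exact hm₁J.2.1, by rw [← h2]; exact hm₂J.2.2⟩
        have hg1 : g.1 ∉ WA := by rw [← h1]; exact hσtrue m₁ hσ1
        have hg2 : g.2 ∉ WB := by
          rw [← h2]
          rcases hone m₂ hm₂ with ⟨-, h⟩ | ⟨h, -⟩
          · exact h
          · exact absurd (hσfalse m₂ hσ2) h
        rcases hcov g hgJ with h | h
        · exact hg1 h
        · exact hg2 h
      · -- hβL
        intro g hg hgM m hm h1 hσ1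
        have hmJ := hMJ hm
        rw [hJ, mem_filter] at hmJ
        have hgL : degL E g.1 = Δ := by rw [← h1]; exact hmJ.2.1
        by_cases hd : degR E g.2 = Δ
        · left
          have hgJ : g ∈ J := mem_filter.mpr ⟨hg, hgL, hd⟩
          rcases hcov g hgJ with h | h
          · exact absurd h (by rw [← h1]; exact hσtrue m hσ1)
          · exact hsatB g.2 h
        · right
          have := (hglob g hg).2
          rw [hgL]
          omega
      · -- hβR
        intro g hg hgM m hm h2 hσ2
        have hmJ := hMJ hm
        rw [hJ, mem_filter] at hmJ
        have hgR : degR E g.2 = Δ := by rw [← h2]; exact hmJ.2.2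
        by_cases hd : degL E g.1 = Δ
        · left
          have hgJ : g ∈ J := mem_filter.mpr ⟨hg, hd, hgR⟩
          rcases hcov g hgJ with h | h
          · exact hsatA g.1 h
          ·
            -- m.2 = g.2 and one-end property : m.1 ∈ WA → m.2 ∉ WB
            rcases hone m hm with ⟨-, hmW⟩ | ⟨hmW, -⟩
            · exact absurd (h2 ▸ h) hmW
            · exact absurd (hσfalse m hσ2) hmW
        · right
          have := (hglob g hg).1
          rw [hgR]
          omega


/-- Stable matching lemma: given a proper colouring, every finite pair-graph has a
"kernel": a matching `K` such that every non-`K` edge is dominated. -/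
theorem stable_matching (n : ℕ) : ∀ (E : Finset (V × V)) (c : V × V → ℤ), E.card = n →
    Proper E c →
    ∃ K ⊆ E, Matching K ∧ ∀ g ∈ E, g ∉ K →
      ∃ k ∈ K, (k.1 = g.1 ∧ c k < c g) ∨ (k.2 = g.2 ∧ c g < c k) := by
  induction n using Nat.strong_induction_on with
  | _ n IH =>
    intro E c hcard hprop
    rcases eq_or_ne E ∅ with rfl | hne
    · exact ⟨∅, by simp, by intro e he; simp at he, by simp⟩
    -- the set of left-vertices
    classical
    -- minimal edge at a left vertex x
    have hmin : ∀ x, (E.filter (fun p => p.1 = x)).Nonempty →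
        ∃ e ∈ E, e.1 = x ∧ ∀ f ∈ E, f.1 = x → c e ≤ c f := by
      intro x hx
      obtain ⟨e, he, hmin⟩ := (E.filter (fun p => p.1 = x)).exists_min_image c hx
      rw [mem_filter] at he
      exact ⟨e, he.1, he.2, fun f hf hf1 => hmin f (mem_filter.mpr ⟨hf, hf1⟩)⟩
    by_cases hcase : ∃ e ∈ E, (∀ f ∈ E, f.1 = e.1 → c e ≤ c f) ∧
        ∃ f ∈ E, f.2 = e.2 ∧ c f < c e
    · -- Case A : delete the edge f
      obtain ⟨e, he, hemin, f, hf, hf2, hflt⟩ := hcase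
      have hfne : f ≠ e := by
        intro h; rw [h] at hflt; exact lt_irrefl _ hflt
      have hcard' : (E.erase f).card < n := by
        rw [← hcard]; exact card_erase_lt_of_mem hf
      obtain ⟨K, hKsub, hKmatch, hKstab⟩ := IH _ hcard' (E.erase f) c rfl
        (fun a ha b hb => hprop a (mem_of_mem_erase ha) b (mem_of_mem_erase hb))
      refine ⟨K, fun k hk => mem_of_mem_erase (hKsub hk), hKmatch, ?_⟩
      intro g hg hgK
      rcases eq_or_ne g f with rfl | hgf
      · -- blocker for f
        have heE : e ∈ E.erase g := mem_erase.mpr ⟨fun h => hfne h.symm, he⟩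
        by_cases heK : e ∈ K
        · exact ⟨e, heK, Or.inr ⟨hf2.symm, hflt⟩⟩
        · obtain ⟨k, hk, hkblk⟩ := hKstab e heE heK
          rcases hkblk with ⟨hk1, hklt⟩ | ⟨hk2, hkgt⟩
          · exfalso
            have : c e ≤ c k := hemin k (mem_of_mem_erase (hKsub hk)) hk1
            omega
          · exact ⟨k, hk, Or.inr ⟨hk2.trans hf2.symm, hflt.trans hkgt⟩⟩
      · obtain ⟨k, hk, hkblk⟩ := hKstab g (mem_erase.mpr ⟨hgf, hg⟩) hgK
        exact ⟨k, hk, hkblk⟩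
    · -- Case B : all minimal edges are also minimal at their right endpoint;
      -- take all of them.
      push_neg at hcase
      -- K := set of minimal edges
      set K : Finset (V × V) :=
        E.filter (fun e => ∀ f ∈ E, f.1 = e.1 → c e ≤ c f) with hK
      have hKsub : K ⊆ E := filter_subset _ _
      have hKmem : ∀ e ∈ K, e ∈ E ∧ ∀ f ∈ E, f.1 = e.1 → c e ≤ c f := by
        intro e he; rw [hK, mem_filter] at he; exact he
      refine ⟨K, hKsub, ?_, ?_⟩
      · intro e he f hf hef
        obtain ⟨heE, hemin⟩ := hKmem e he
        obtain ⟨hfE, hfmin⟩ := hKmem f hf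
        constructor
        · intro h1
          have h2 := hemin f hfE h1.symm
          have h3 := hfmin e heE h1
          have := hprop e heE f hfE hef (Or.inl h1)
          omega
        · intro h2
          -- both minimal at shared right vertex: use hcase
          have hble := hcase e heE hemin f hfE h2.symm
          have hble' := hcase f hfE hfmin e heE h2
          have := hprop e heE f hfE hef (Or.inr h2)
          omega
      · intro g hg hgK
        have hgfil : (E.filter (fun p => p.1 = g.1)).Nonempty :=
          ⟨g, mem_filter.mpr ⟨hg, rfl⟩⟩
        obtain ⟨e, heE, he1, hemin⟩ := hmin g.1 hgfil
        have heK : e ∈ K := mem_filter.mpr ⟨heE, by rw [he1]; exact hemin⟩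
        have hne' : e ≠ g := by rintro rfl; exact hgK heK
        have hlt : c e < c g := by
          have h1 := hemin g hg rfl
          have h2 := hprop e heE g hg hne' (Or.inl he1)
          omega
        exact ⟨e, heK, Or.inl ⟨he1, hlt⟩⟩


/-- Kernel-method list colouring lemma. -/
theorem list_coloring (n : ℕ) : ∀ (E : Finset (V × V)) (L : V × V → Finset ℕ)
    (c : V × V → ℤ), E.card = n → Proper E c →
    (∀ e ∈ E, cntA E c e + cntB E c e < (L e).card) →
    ∃ C : V × V → ℕ, (∀ e ∈ E, C e ∈ L e) ∧
      (∀ e ∈ E, ∀ f ∈ E, e ≠ f → (e.1 = f.1 ∨ e.2 = f.2) → C e ≠ C f) := by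
  induction n using Nat.strong_induction_on with
  | _ n IH =>
    intro E L c hcard hprop hbound
    rcases eq_or_ne E ∅ with rfl | hne
    · exact ⟨fun _ => 0, by simp, by simp⟩
    classical
    obtain ⟨e₀, he₀⟩ := nonempty_iff_ne_empty.mpr hne
    have hL₀ : (L e₀).Nonempty := by
      rw [← card_pos]
      have := hbound e₀ he₀; omega
    obtain ⟨α, hα⟩ := hL₀
    set Eα := E.filter (fun e => α ∈ L e) with hEα
    have hEαsub : Eα ⊆ E := filter_subset _ _
    have hEαne : Eα.Nonempty := ⟨e₀, mem_filter.mpr ⟨he₀, hα⟩⟩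
    obtain ⟨K, hKsub, hKmatch, hKstab⟩ := stable_matching Eα.card Eα c rfl
      (fun a ha b hb => hprop a (hEαsub ha) b (hEαsub hb))
    have hKne : K.Nonempty := by
      rcases K.eq_empty_or_nonempty with rfl | h
      · obtain ⟨a, ha⟩ := hEαne
        obtain ⟨k, hk, -⟩ := hKstab a ha (notMem_empty a)
        exact absurd hk (notMem_empty k)
      · exact h
    set E' := E \ K with hE'
    have hE'sub : E' ⊆ E := sdiff_subset
    have hcard' : E'.card < n := by
      rw [← hcard]
      apply card_lt_card
      rw [ssubset_iff_of_subset hE'sub]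
      obtain ⟨k, hk⟩ := hKne
      exact ⟨k, hEαsub (hKsub hk), by simp [hE', hKsub hk, hk]⟩
    set L' : V × V → Finset ℕ := fun e => if α ∈ L e then (L e).erase α else L e with hL'
    have hbound' : ∀ e ∈ E', cntA E' c e + cntB E' c e < (L' e).card := by
      intro e he
      have heE := hE'sub he
      have hsubA : E'.filter (fun f => f.1 = e.1 ∧ c f < c e) ⊆
          E.filter (fun f => f.1 = e.1 ∧ c f < c e) :=
        filter_subset_filter _ hE'sub
      have hsubB : E'.filter (fun f => f.2 = e.2 ∧ c e < c f) ⊆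
          E.filter (fun f => f.2 = e.2 ∧ c e < c f) :=
        filter_subset_filter _ hE'sub
      by_cases hmem : α ∈ L e
      · -- e ∈ Eα \ K, hence blocked by some k ∈ K
        have heEα : e ∈ Eα := mem_filter.mpr ⟨heE, hmem⟩
        have heK : e ∉ K := by
          intro h; rw [hE'] at he; simp [mem_sdiff, h] at he
        obtain ⟨k, hk, hkblk⟩ := hKstab e heEα heK
        have hkE' : k ∉ E' := by simp [hE', hk]
        have hLe : (L' e).card = (L e).card - 1 := by
          simp [hL', hmem, card_erase_of_mem hmem]
        have hcnt : cntA E' c e + cntB E' c e + 1 ≤ cntA E c e + cntB E c e := by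
          rcases hkblk with ⟨hk1, hklt⟩ | ⟨hk2, hkgt⟩
          · have hkin : k ∈ E.filter (fun f => f.1 = e.1 ∧ c f < c e) :=
              mem_filter.mpr ⟨hEαsub (hKsub hk), hk1, hklt⟩
            have : E'.filter (fun f => f.1 = e.1 ∧ c f < c e) ⊆
                (E.filter (fun f => f.1 = e.1 ∧ c f < c e)).erase k := by
              intro a ha
              refine mem_erase.mpr ⟨?_, hsubA ha⟩
              rintro rfl; exact hkE' (mem_of_mem_filter a ha)
            have h1 := card_le_card this
            have h2 : ((E.filter (fun f => f.1 = e.1 ∧ c f < c e)).erase k).card =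
                (E.filter (fun f => f.1 = e.1 ∧ c f < c e)).card - 1 :=
              card_erase_of_mem hkin
            have h3 := card_le_card hsubB
            have h4 : 0 < (E.filter (fun f => f.1 = e.1 ∧ c f < c e)).card :=
              card_pos.mpr ⟨k, hkin⟩
            unfold cntA cntB
            omega
          · have hkin : k ∈ E.filter (fun f => f.2 = e.2 ∧ c e < c f) :=
              mem_filter.mpr ⟨hEαsub (hKsub hk), hk2, hkgt⟩
            have : E'.filter (fun f => f.2 = e.2 ∧ c e < c f) ⊆
                (E.filter (fun f => f.2 = e.2 ∧ c e < c f)).erase k := by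
              intro a ha
              refine mem_erase.mpr ⟨?_, hsubB ha⟩
              rintro rfl; exact hkE' (mem_of_mem_filter a ha)
            have h1 := card_le_card this
            have h2 : ((E.filter (fun f => f.2 = e.2 ∧ c e < c f)).erase k).card =
                (E.filter (fun f => f.2 = e.2 ∧ c e < c f)).card - 1 :=
              card_erase_of_mem hkin
            have h3 := card_le_card hsubA
            have h4 : 0 < (E.filter (fun f => f.2 = e.2 ∧ c e < c f)).card :=
              card_pos.mpr ⟨k, hkin⟩
            unfold cntA cntB
            omega
        have hb := hbound e heE
        have hlc : 0 < (L e).card := card_pos.mpr ⟨α, hmem⟩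
        unfold cntA cntB at *
        omega
      · have hLe : L' e = L e := by simp [hL', hmem]
        have h1 := card_le_card hsubA
        have h2 := card_le_card hsubB
        have hb := hbound e heE
        rw [hLe]
        unfold cntA cntB at *
        omega
    obtain ⟨C', hC'mem, hC'prop⟩ := IH E'.card hcard' E' L' c rfl
      (fun a ha b hb => hprop a (hE'sub ha) b (hE'sub hb)) hbound'
    refine ⟨fun e => if e ∈ K then α else C' e, ?_, ?_⟩
    · intro e he
      by_cases hK : e ∈ K
      · simpa [hK] using (mem_filter.mp (hKsub hK)).2
      · have heE' : e ∈ E' := mem_sdiff.mpr ⟨he, hK⟩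
        have := hC'mem e heE'
        simp only [hK, if_false]
        by_cases hmem : α ∈ L e
        · simp [hL', hmem] at this
          exact this.2
        · simpa [hL', hmem] using this
    · intro e he f hf hef hadj
      by_cases heK : e ∈ K <;> by_cases hfK : f ∈ K
      · exfalso
        obtain ⟨h1, h2⟩ := hKmatch e heK f hfK hef
        tauto
      · -- C e = α, C f = C' f ∈ L' f which avoids α
        have hfE' : f ∈ E' := mem_sdiff.mpr ⟨hf, hfK⟩
        have hCf := hC'mem f hfE'
        simp only [heK, if_true, hfK, if_false]
        intro h
        rw [← h] at hCf
        by_cases hmem : α ∈ L f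
        · simp [hL', hmem] at hCf
        · simp [hL', hmem] at hCf
      · have heE' : e ∈ E' := mem_sdiff.mpr ⟨he, heK⟩
        have hCe := hC'mem e heE'
        simp only [heK, if_false, hfK, if_true]
        intro h
        rw [h] at hCe
        by_cases hmem : α ∈ L e
        · simp [hL', hmem] at hCe
        · simp [hL', hmem] at hCe
      · have heE' : e ∈ E' := mem_sdiff.mpr ⟨he, heK⟩
        have hfE' : f ∈ E' := mem_sdiff.mpr ⟨hf, hfK⟩
        simpa [heK, hfK] using hC'prop e heE' f hfE' hef hadj


end BKW

open SimpleGraph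

/-- Borodin–Kostochka–Woodall: a bipartite graph with edge lists satisfying
|L(xy)| ≥ max{deg(x), deg(y)} is L-edge-colourable. -/
theorem statement4 {V : Type} [Fintype V] (G : SimpleGraph V)
    (hbip : ∃ A : Set V, ∀ u v, G.Adj u v → (u ∈ A ↔ v ∉ A))
    (L : Sym2 V → Finset ℕ)
    (hL : ∀ u v, G.Adj u v → max (edeg G u) (edeg G v) ≤ (L s(u, v)).card) :
    ∃ C : Sym2 V → ℕ, IsListEdgeColoring G L C := by
  classical
  obtain ⟨A, hA⟩ := hbip
  set E : Finset (V × V) :=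
    Finset.univ.filter (fun p : V × V => G.Adj p.1 p.2 ∧ p.1 ∈ A) with hE
  have hEmem : ∀ p : V × V, p ∈ E ↔ G.Adj p.1 p.2 ∧ p.1 ∈ A := by
    intro p; simp [hE]
  have hsnd : ∀ p ∈ E, p.2 ∉ A := by
    intro p hp
    rw [hEmem] at hp
    exact (hA p.1 p.2 hp.1).mp hp.2
  -- the degrees agree
  have hedeg : ∀ u : V, edeg G u = (Finset.univ.filter (fun v => G.Adj u v)).card := by
    intro u
    have h1 : G.neighborSet u = ↑(Finset.univ.filter (fun v => G.Adj u v)) := by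
      ext v; simp [SimpleGraph.mem_neighborSet]
    rw [edeg, h1, Set.ncard_coe_finset]
  have hdegL : ∀ p ∈ E, BKW.degL E p.1 = edeg G p.1 := by
    intro p hp
    rw [hedeg]
    apply Finset.card_bij (fun a _ => a.2)
    · intro a ha
      rw [Finset.mem_filter] at ha
      have := (hEmem a).mp ha.1
      rw [Finset.mem_filter]
      exact ⟨Finset.mem_univ _, ha.2 ▸ this.1⟩
    · intro a ha b hb hab
      rw [Finset.mem_filter] at ha hb
      exact Prod.ext (ha.2.trans hb.2.symm) hab
    · intro v hv
      rw [Finset.mem_filter] at hv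
      have hp' := (hEmem p).mp hp
      refine ⟨(p.1, v), Finset.mem_filter.mpr ⟨(hEmem (p.1, v)).mpr ⟨hv.2, hp'.2⟩, rfl⟩, rfl⟩
  have hdegR : ∀ p ∈ E, BKW.degR E p.2 = edeg G p.2 := by
    intro p hp
    rw [hedeg]
    apply Finset.card_bij (fun a _ => a.1)
    · intro a ha
      rw [Finset.mem_filter] at ha
      have := (hEmem a).mp ha.1
      rw [Finset.mem_filter]
      exact ⟨Finset.mem_univ _, (ha.2 ▸ this.1).symm⟩
    · intro a ha b hb hab
      rw [Finset.mem_filter] at ha hb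
      exact Prod.ext hab (ha.2.trans hb.2.symm)
    · intro u hu
      rw [Finset.mem_filter] at hu
      have hadj : G.Adj u p.2 := hu.2.symm
      have huA : u ∈ A := by
        by_contra h
        exact (hsnd p hp) (((hA u p.2 hadj).not_left).mp h)
      refine ⟨(u, p.2), Finset.mem_filter.mpr ⟨(hEmem (u, p.2)).mpr ⟨hadj, huA⟩, rfl⟩, rfl⟩
  obtain ⟨c, hprop, hbound⟩ := BKW.exists_good E.card E rfl
  set Lp : V × V → Finset ℕ := fun p => L s(p.1, p.2) with hLp
  have hbound2 : ∀ e ∈ E, BKW.cntA E c e + BKW.cntB E c e < (Lp e).card := by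
    intro e he
    have h1 := hbound e he
    rw [hdegL e he, hdegR e he] at h1
    have h2 : BKW.cntA E c e + BKW.cntB E c e < max (edeg G e.1) (edeg G e.2) :=
      Nat.lt_of_succ_le h1
    have hadj : G.Adj e.1 e.2 := ((hEmem e).mp he).1
    exact lt_of_lt_of_le h2 (hL e.1 e.2 hadj)
  obtain ⟨Cp, hCpmem, hCpprop⟩ := BKW.list_coloring E.card E Lp c rfl hprop hbound2
  -- build the symmetric colouring
  have hgsymm : ∀ u v : V,
      (if (u, v) ∈ E then Cp (u, v) else if (v, u) ∈ E then Cp (v, u) else 0) =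
      (if (v, u) ∈ E then Cp (v, u) else if (u, v) ∈ E then Cp (u, v) else 0) := by
    intro u v
    by_cases h1 : (u, v) ∈ E <;> by_cases h2 : (v, u) ∈ E <;> simp [h1, h2]
    exact absurd ((hEmem (v, u)).mp h2).2 (hsnd (u, v) h1)
  set C : Sym2 V → ℕ := Sym2.lift ⟨fun u v =>
    if (u, v) ∈ E then Cp (u, v) else if (v, u) ∈ E then Cp (v, u) else 0, hgsymm⟩ with hC
  have hrep : ∀ e ∈ G.edgeSet, ∃ p ∈ E, e = s(p.1, p.2) ∧ C e = Cp p := by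
    intro e he
    induction e with
    | _ u v =>
      rw [SimpleGraph.mem_edgeSet] at he
      by_cases hu : u ∈ A
      · have hmem : (u, v) ∈ E := (hEmem (u, v)).mpr ⟨he, hu⟩
        exact ⟨(u, v), hmem, rfl, by simp [hC, Sym2.lift_mk, hmem]⟩
      · have hv : v ∈ A := by
          by_contra h
          exact hu ((hA u v he).mpr h)
        have hmem : (v, u) ∈ E := (hEmem (v, u)).mpr ⟨he.symm, hv⟩
        have hnmem : (u, v) ∉ E := by
          intro h
          exact hu ((hEmem (u, v)).mp h).2
        refine ⟨(v, u), hmem, Sym2.eq_swap, by simp [hC, Sym2.lift_mk, hmem, hnmem]⟩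
  have hpair : ∀ p ∈ E, ∀ q ∈ E, s(p.1, p.2) = s(q.1, q.2) → p = q := by
    intro p hp q hq h
    rw [Sym2.eq_iff] at h
    rcases h with ⟨h1, h2⟩ | ⟨h1, h2⟩
    · exact Prod.ext h1 h2
    · exfalso
      have := ((hEmem p).mp hp).2
      rw [h1] at this
      exact (hsnd q hq) this
  refine ⟨C, ?_, ?_⟩
  · intro e he
    obtain ⟨p, hp, hrfl, hval⟩ := hrep e he
    rw [hval, hrfl]
    exact hCpmem p hp
  · intro e he f hf ⟨hef, w, hwe, hwf⟩
    obtain ⟨p, hp, hrflp, hvalp⟩ := hrep e he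
    obtain ⟨q, hq, hrflq, hvalq⟩ := hrep f hf
    have hpq : p ≠ q := by
      intro h
      rw [h] at hrflp
      exact hef (hrflp.trans hrflq.symm)
    rw [hvalp, hvalq]
    apply hCpprop p hp q hq hpq
    rw [hrflp, Sym2.mem_iff] at hwe
    rw [hrflq, Sym2.mem_iff] at hwf
    have hp1 := ((hEmem p).mp hp).2
    have hp2 := hsnd p hp
    have hq1 := ((hEmem q).mp hq).2
    have hq2 := hsnd q hq
    rcases hwe with h1 | h1 <;> rcases hwf with h2 | h2
    · exact Or.inl (h1.symm.trans h2)
    · exact absurd (h1 ▸ hp1) (h2 ▸ hq2)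
    · exact absurd (h2 ▸ hq1) (h1 ▸ hp2)
    · exact Or.inr (h1.symm.trans h2)
end

section
/- Let X be a bipartite graph with parts A and B, and let f: A → ℤ, g: B → ℤ be functions with f(u) ≥ 1 for all u ∈ A and g(v) ≥ 1 for all v ∈ B. Suppose every induced subgraph J of X with at least one vertex contains a vertex u ∈ A ∩ V(J) with deg_J(u) ≤ f(u) - 1 or a vertex v ∈ B ∩ V(J) with deg_J(v) ≤ g(v) - 1. Then |E(X)| ≤ Σ_{u∈A}(f(u) - 1) + Σ_{v∈B}(g(v) - 1). -/
open SimpleGraph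

/-- the edge-counting/dismantling step. If every nonempty induced subgraph of a
bipartite graph X with parts A, B has a vertex of small induced degree, then the number of
edges is at most Σ_{u∈A}(f(u)-1) + Σ_{v∈B}(g(v)-1). -/
theorem statement8 {V : Type} [Fintype V] [DecidableEq V]
    (X : SimpleGraph V) [DecidableRel X.Adj]
    (A B : Finset V) (hdisj : Disjoint A B)
    (hbip : ∀ u v, X.Adj u v → (u ∈ A ∧ v ∈ B) ∨ (u ∈ B ∧ v ∈ A))
    (f g : V → ℤ) (hf : ∀ u ∈ A, 1 ≤ f u) (hg : ∀ v ∈ B, 1 ≤ g v)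
    (hdismantle : ∀ S : Finset V, S ⊆ A ∪ B → S.Nonempty →
      (∃ u ∈ A ∩ S, ((S.filter (X.Adj u)).card : ℤ) ≤ f u - 1) ∨
      (∃ v ∈ B ∩ S, ((S.filter (X.Adj v)).card : ℤ) ≤ g v - 1)) :
    (X.edgeFinset.card : ℤ) ≤ (∑ u ∈ A, (f u - 1)) + ∑ v ∈ B, (g v - 1) := by
  classical
  set P : Finset V → Finset (Sym2 V) :=
    fun S => X.edgeFinset.filter (fun e => ∀ v ∈ e, v ∈ S) with hP
  -- counting step: removing a vertex x from S
  have step : ∀ (S : Finset V) (x : V), x ∈ S →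
      ((P S).card : ℤ) ≤ (P (S.erase x)).card + (S.filter (X.Adj x)).card := by
    intro S x hx
    have hsplit := Finset.card_filter_add_card_filter_not
      (s := P S) (p := fun e => x ∈ e)
    have h1 : (P S).filter (fun e => ¬ x ∈ e) ⊆ P (S.erase x) := by
      intro e he
      simp only [hP, Finset.mem_filter] at he ⊢
      exact ⟨he.1.1, fun v hv => Finset.mem_erase.mpr
        ⟨fun h => he.2 (h ▸ hv), he.1.2 v hv⟩⟩
    have h2 : (P S).filter (fun e => x ∈ e) ⊆
        (S.filter (X.Adj x)).image (fun w => s(x, w)) := by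
      intro e he
      simp only [hP, Finset.mem_filter, mem_edgeFinset] at he
      obtain ⟨⟨he1, he2⟩, hxe⟩ := he
      induction e with
      | h a b =>
        rw [Sym2.mem_iff] at hxe
        rcases hxe with rfl | rfl
        · refine Finset.mem_image.mpr ⟨b, Finset.mem_filter.mpr
            ⟨he2 b (Sym2.mem_mk_right _ _), ?_⟩, rfl⟩
          exact (mem_edgeSet X).mp he1
        · refine Finset.mem_image.mpr ⟨a, Finset.mem_filter.mpr
            ⟨he2 a (Sym2.mem_mk_left _ _), ?_⟩, ?_⟩
          · exact ((mem_edgeSet X).mp he1).symm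
          · exact Sym2.eq_swap
    have c2 : ((P S).filter (fun e => x ∈ e)).card ≤ (S.filter (X.Adj x)).card :=
      (Finset.card_le_card h2).trans Finset.card_image_le
    have c1 : ((P S).filter (fun e => ¬ x ∈ e)).card ≤ (P (S.erase x)).card :=
      Finset.card_le_card h1
    have := hsplit
    push_cast
    omega
  have key : ∀ n (S : Finset V), S.card = n → S ⊆ A ∪ B →
      ((P S).card : ℤ) ≤ ∑ u ∈ A ∩ S, (f u - 1) + ∑ v ∈ B ∩ S, (g v - 1) := by
    intro n
    induction n with
    | zero =>
      intro S hcard hsub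
      obtain rfl := Finset.card_eq_zero.mp hcard
      have : P ∅ = ∅ := by
        rw [Finset.eq_empty_iff_forall_notMem]
        intro e he
        simp only [hP, Finset.mem_filter] at he
        induction e with
        | h a b => exact absurd (he.2 a (Sym2.mem_mk_left _ _)) (Finset.notMem_empty a)
      simp [this]
    | succ n ih =>
      intro S hcard hsub
      have hne : S.Nonempty := Finset.card_pos.mp (by omega)
      rcases hdismantle S hsub hne with ⟨x, hx, hdeg⟩ | ⟨x, hx, hdeg⟩
      · rw [Finset.mem_inter] at hx
        have hxS := hx.2
        have hstep := step S x hxS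
        have hih := ih (S.erase x) (by rw [Finset.card_erase_of_mem hxS]; omega)
          ((Finset.erase_subset _ _).trans hsub)
        have hA : A ∩ S.erase x = (A ∩ S).erase x := by
          ext y; simp [Finset.mem_erase, Finset.mem_inter]; tauto
        have hB : B ∩ S.erase x = B ∩ S := by
          have : B ∩ S.erase x = (B ∩ S).erase x := by
            ext y; simp [Finset.mem_erase, Finset.mem_inter]; tauto
          rw [this, Finset.erase_eq_of_notMem]
          intro h
          exact Finset.disjoint_left.mp hdisj hx.1 (Finset.mem_inter.mp h).1
        rw [hA, hB] at hih
        have hxAS : x ∈ A ∩ S := Finset.mem_inter.mpr hx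
        have hsum : ∑ u ∈ A ∩ S, (f u - 1)
            = (f x - 1) + ∑ u ∈ (A ∩ S).erase x, (f u - 1) :=
          (Finset.add_sum_erase _ _ hxAS).symm
        rw [hsum]
        linarith
      · rw [Finset.mem_inter] at hx
        have hxS := hx.2
        have hstep := step S x hxS
        have hih := ih (S.erase x) (by rw [Finset.card_erase_of_mem hxS]; omega)
          ((Finset.erase_subset _ _).trans hsub)
        have hB : B ∩ S.erase x = (B ∩ S).erase x := by
          ext y; simp [Finset.mem_erase, Finset.mem_inter]; tauto
        have hA : A ∩ S.erase x = A ∩ S := by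
          have : A ∩ S.erase x = (A ∩ S).erase x := by
            ext y; simp [Finset.mem_erase, Finset.mem_inter]; tauto
          rw [this, Finset.erase_eq_of_notMem]
          intro h
          exact Finset.disjoint_right.mp hdisj hx.1 (Finset.mem_inter.mp h).1
        rw [hA, hB] at hih
        have hxBS : x ∈ B ∩ S := Finset.mem_inter.mpr hx
        have hsum : ∑ v ∈ B ∩ S, (g v - 1)
            = (g x - 1) + ∑ v ∈ (B ∩ S).erase x, (g v - 1) :=
          (Finset.add_sum_erase _ _ hxBS).symm
        rw [hsum]
        linarith
  have hfull : P (A ∪ B) = X.edgeFinset := by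
    apply Finset.filter_true_of_mem
    intro e he
    rw [mem_edgeFinset] at he
    induction e with
    | h a b =>
      intro v hv
      have hadj : X.Adj a b := (mem_edgeSet X).mp he
      rw [Sym2.mem_iff] at hv
      rcases hbip a b hadj with ⟨ha, hb⟩ | ⟨ha, hb⟩ <;> rcases hv with rfl | rfl <;>
        simp [Finset.mem_union, ha, hb]
  have := key (A ∪ B).card (A ∪ B) rfl (subset_refl _)
  rw [hfull, Finset.inter_eq_left.mpr Finset.subset_union_left,
    Finset.inter_eq_left.mpr Finset.subset_union_right] at this
  exact this
end
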